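/- arXiv:2405.16192 — 11 statements merged into one kernel-verified Lean document; each statement's English description precedes it below -/
import Mathlib

section
/- For all real a > 0 and λ > 0, the function z ↦ z^{a-1} · exp(−λz) · log z is integrable on (0, ∞) and ∫₀^∞ z^{a-1} · exp(−λz) · log z dz = Γ(a) · (ψ(a) − log λ) / λ^a. Equivalently, if Z has the Gamma distribution with shape a and rate λ, then E[log Z] = ψ(a) − log λ. -/
open MeasureTheory Real

/-- The digamma function `ψ(t) = Γ'(t)/Γ(t)`. -/
noncomputable def digamma (t : ℝ) : ℝ := deriv Real.Gamma t / Real.Gamma t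

section GammaDerivAux
open Set Filter Asymptotics Topology

/-- The integrand for `Γ'` is integrable, and `Γ'(a)` equals its integral. -/
lemma Gamma_deriv_aux {a : ℝ} (ha : 0 < a) :
    IntegrableOn (fun t : ℝ => t ^ (a - 1) * (Real.log t * Real.exp (-t))) (Set.Ioi 0) ∧
    HasDerivAt Real.Gamma
      (∫ t in Set.Ioi (0:ℝ), t ^ (a - 1) * (Real.log t * Real.exp (-t))) a := by
  -- complex derivative of GammaIntegral
  have has : (0:ℝ) < ((a:ℂ)).re := by simpa using ha
  -- integrability: use the Mellin machinery
  have hfc : LocallyIntegrableOn (fun x : ℝ => ((Real.exp (-x) : ℝ) : ℂ)) (Ioi 0) := by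
    refine (Continuous.continuousOn ?_).locallyIntegrableOn measurableSet_Ioi
    exact Complex.continuous_ofReal.comp (Real.continuous_exp.comp continuous_neg)
  have htop : (fun x : ℝ => ((Real.exp (-x) : ℝ) : ℂ)) =O[atTop]
      (· ^ (-((a:ℂ).re + 1))) := by
    rw [← isBigO_norm_left]
    simp_rw [Complex.norm_real, isBigO_norm_left]
    simpa only [neg_one_mul] using (isLittleO_exp_neg_mul_rpow_atTop zero_lt_one _).isBigO
  have hbot : (fun x : ℝ => ((Real.exp (-x) : ℝ) : ℂ)) =O[𝓝[>] 0] (· ^ (-(0:ℝ))) := by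
    simp_rw [neg_zero, Real.rpow_zero]
    refine isBigO_const_of_tendsto (?_ : Tendsto _ _ (𝓝 (1 : ℂ))) one_ne_zero
    rw [(by simp : (1 : ℂ) = ((Real.exp (-0) : ℝ) : ℂ))]
    exact (Complex.continuous_ofReal.comp
      (Real.continuous_exp.comp continuous_neg)).continuousWithinAt
  have key := mellin_hasDerivAt_of_isBigO_rpow (E := ℂ) hfc htop (lt_add_one _) hbot has
  -- real integrability
  have hint : IntegrableOn (fun t : ℝ => t ^ (a - 1) * (Real.log t * Real.exp (-t)))
      (Set.Ioi 0) := by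
    have h1 : IntegrableOn (fun t : ℝ =>
        (t : ℂ) ^ ((a:ℂ) - 1) • (Real.log t • ((Real.exp (-t) : ℝ) : ℂ))) (Ioi 0) := key.1
    have h2 : IntegrableOn (fun t : ℝ =>
        ((t : ℂ) ^ ((a:ℂ) - 1) • (Real.log t • ((Real.exp (-t) : ℝ) : ℂ))).re) (Ioi 0) := h1.re
    refine h2.congr_fun (fun t ht => ?_) measurableSet_Ioi
    have ht' : (0:ℝ) < t := ht
    have hc : ((t : ℝ) : ℂ) ^ ((a:ℂ) - 1) = ((t ^ (a - 1) : ℝ) : ℂ) := by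
      rw [Complex.ofReal_cpow ht'.le]; push_cast; ring_nf
    beta_reduce
    rw [smul_eq_mul, Complex.real_smul, hc, ← Complex.ofReal_mul, ← Complex.ofReal_mul,
      Complex.ofReal_re]
  refine ⟨hint, ?_⟩
  -- the complex derivative
  have hD := Complex.hasDerivAt_GammaIntegral has
  have heq : Complex.Gamma =ᶠ[nhds (a:ℂ)] Complex.GammaIntegral := by
    have hopen : IsOpen {s : ℂ | 0 < s.re} := isOpen_lt continuous_const Complex.continuous_re
    filter_upwards [hopen.mem_nhds has] with s hs
    exact Complex.Gamma_eq_integral hs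
  have hD' : HasDerivAt Complex.Gamma
      (∫ t : ℝ in Ioi 0, (t:ℂ) ^ ((a:ℂ) - 1) * (Real.log t * Real.exp (-t))) (a:ℂ) :=
    hD.congr_of_eventuallyEq heq
  have hR := hD'.real_of_complex
  have hfun : (fun x : ℝ => (Complex.Gamma (x:ℂ)).re) = Real.Gamma := by
    funext x; rw [Complex.Gamma_ofReal]; simp
  rw [hfun] at hR
  convert hR using 1
  -- compute the real part of the integral
  have : (∫ t : ℝ in Ioi 0, (t:ℂ) ^ ((a:ℂ) - 1) * (Real.log t * Real.exp (-t)))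
      = ((∫ t : ℝ in Ioi 0, t ^ (a - 1) * (Real.log t * Real.exp (-t)) : ℝ) : ℂ) := by
    rw [show ((∫ t in Ioi (0:ℝ), t ^ (a - 1) * (Real.log t * Real.exp (-t)) : ℝ) : ℂ)
        = ∫ t in Ioi (0:ℝ), ((t ^ (a - 1) * (Real.log t * Real.exp (-t)) : ℝ) : ℂ) from
      integral_ofReal.symm]
    refine setIntegral_congr_fun measurableSet_Ioi (fun t ht => ?_)
    have ht' : (0:ℝ) < t := ht
    have hc : ((t : ℝ) : ℂ) ^ ((a:ℂ) - 1) = ((t ^ (a - 1) : ℝ) : ℂ) := by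
      rw [Complex.ofReal_cpow ht'.le]; push_cast; ring_nf
    rw [hc]
    push_cast
    ring
  rw [this, Complex.ofReal_re]

end GammaDerivAux

/-- For `a > 0` and `λ > 0`, the function `z ↦ z^(a-1) · exp(−λz) · log z` is integrable on
`(0, ∞)` and `∫₀^∞ z^(a-1) · exp(−λz) · log z dz = Γ(a) · (ψ(a) − log λ) / λ^a`; equivalently,
if `Z ~ Gamma(a, λ)` then `E[log Z] = ψ(a) − log λ`. -/
theorem gamma_log_moment (a l : ℝ) (ha : 0 < a) (hl : 0 < l) :
    IntegrableOn (fun z : ℝ => z ^ (a - 1) * Real.exp (-l * z) * Real.log z) (Set.Ioi 0) ∧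
    ∫ z in Set.Ioi (0 : ℝ), z ^ (a - 1) * Real.exp (-l * z) * Real.log z
      = Real.Gamma a * (digamma a - Real.log l) / l ^ a := by
  obtain ⟨hgint, hderiv⟩ := Gamma_deriv_aux ha
  set g : ℝ → ℝ := fun t => t ^ (a - 1) * (Real.log t * Real.exp (-t)) with hgdef
  set G : ℝ → ℝ := fun t => Real.exp (-t) * t ^ (a - 1) with hGdef
  have hGint : IntegrableOn G (Set.Ioi 0) := Real.GammaIntegral_convergent ha
  have hcg : IntegrableOn (fun z : ℝ => g (l * z)) (Set.Ioi 0) := by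
    rw [integrableOn_Ioi_comp_mul_left_iff g 0 hl, mul_zero]; exact hgint
  have hcG : IntegrableOn (fun z : ℝ => G (l * z)) (Set.Ioi 0) := by
    rw [integrableOn_Ioi_comp_mul_left_iff G 0 hl, mul_zero]; exact hGint
  have hpt : ∀ z ∈ Set.Ioi (0:ℝ),
      z ^ (a - 1) * Real.exp (-l * z) * Real.log z
        = l ^ (1 - a) * g (l * z) - Real.log l * (l ^ (1 - a) * G (l * z)) := by
    intro z hz
    have hz' : (0:ℝ) < z := hz
    have h1 : (l * z) ^ (a - 1) = l ^ (a - 1) * z ^ (a - 1) := Real.mul_rpow hl.le hz'.le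
    have h2 : Real.log (l * z) = Real.log l + Real.log z := Real.log_mul hl.ne' hz'.ne'
    have h3 : l ^ (1 - a) * l ^ (a - 1) = 1 := by
      rw [← Real.rpow_add hl]; norm_num
    simp only [hgdef, hGdef, h1, h2, neg_mul]
    linear_combination (-(z ^ (a - 1) * Real.exp (-(l * z)) * Real.log z)) * h3
  have hint : IntegrableOn (fun z : ℝ => z ^ (a - 1) * Real.exp (-l * z) * Real.log z)
      (Set.Ioi 0) := by
    have hcomb : IntegrableOn
        (fun z : ℝ => l ^ (1 - a) * g (l * z) - Real.log l * (l ^ (1 - a) * G (l * z)))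
        (Set.Ioi 0) :=
      (hcg.const_mul _).sub ((hcG.const_mul _).const_mul _)
    exact hcomb.congr_fun (fun z hz => (hpt z hz).symm) measurableSet_Ioi
  refine ⟨hint, ?_⟩
  rw [setIntegral_congr_fun measurableSet_Ioi hpt,
    integral_sub (hcg.const_mul _) ((hcG.const_mul _).const_mul _),
    MeasureTheory.integral_const_mul, MeasureTheory.integral_const_mul,
    MeasureTheory.integral_const_mul]
  have hIg : ∫ z in Set.Ioi (0:ℝ), g (l * z) = l⁻¹ * ∫ t in Set.Ioi (0:ℝ), g t := by
    rw [integral_comp_mul_left_Ioi g 0 hl, mul_zero, smul_eq_mul]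
  have hIG : ∫ z in Set.Ioi (0:ℝ), G (l * z) = l⁻¹ * ∫ t in Set.Ioi (0:ℝ), G t := by
    rw [integral_comp_mul_left_Ioi G 0 hl, mul_zero, smul_eq_mul]
  have hGa : ∫ t in Set.Ioi (0:ℝ), G t = Real.Gamma a := (Real.Gamma_eq_integral ha).symm
  have hDa : ∫ t in Set.Ioi (0:ℝ), g t = deriv Real.Gamma a := hderiv.deriv.symm
  rw [hIg, hIG, hGa, hDa, digamma]
  have hGne : Real.Gamma a ≠ 0 := (Real.Gamma_pos_of_pos ha).ne'
  have hlane : l ^ a ≠ 0 := (Real.rpow_pos_of_pos hl a).ne'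
  have h4 : l ^ (1 - a) * l⁻¹ = (l ^ a)⁻¹ := by
    rw [← Real.rpow_neg_one l, ← Real.rpow_add hl, ← Real.rpow_neg hl.le]
    ring_nf
  have hR : Real.Gamma a * (deriv Real.Gamma a / Real.Gamma a - Real.log l) / l ^ a
      = (deriv Real.Gamma a - Real.log l * Real.Gamma a) * (l ^ a)⁻¹ := by
    field_simp
  rw [hR]
  linear_combination (deriv Real.Gamma a - Real.log l * Real.Gamma a) * h4
end

section
/- For all μ > 0, σ > 0 and s ≠ 0, the function f_{μ,σ,s} is integrable on (0, ∞) and ∫₀^∞ f_{μ,σ,s}(x) dx = 1, i.e. f_{μ,σ,s} is a probability density on (0, ∞). -/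
open MeasureTheory Real

/-- The weighted exponential-family density with generator `T(x) = x^(-s)`:
`f_{μ,σ,s}(x) = ((μσ)^(μ+1) / ((σ+1)·Γ(μ+1))) · (1 + x^(-s)) · (|s|/x) · x^(-sμ) · exp(−μσ·x^(-s))`. -/
noncomputable def weightedExpDensity (μ σ s x : ℝ) : ℝ :=
  ((μ * σ) ^ (μ + 1) / ((σ + 1) * Real.Gamma (μ + 1))) * (1 + x ^ (-s)) * (|s| / x) *
    x ^ (-(s * μ)) * Real.exp (-(μ * σ) * x ^ (-s))

lemma wed_aux_integrable (b t : ℝ) (hb : 0 < b) (ht : 0 < t) :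
    IntegrableOn (fun y : ℝ => y ^ (t - 1) * Real.exp (-(b * y))) (Set.Ioi 0) := by
  have := integrableOn_rpow_mul_exp_neg_mul_rpow (p := 1) (s := t - 1) (b := b)
    (by linarith) zero_lt_one hb
  refine this.congr_fun (fun x hx => ?_) measurableSet_Ioi
  dsimp only
  rw [Real.rpow_one, neg_mul]

/-- For `μ > 0`, `σ > 0`, `s ≠ 0`, the function `f_{μ,σ,s}` is integrable on `(0, ∞)` and
integrates to `1`, i.e. it is a probability density on `(0, ∞)`. -/
theorem weightedExpDensity_integral_eq_one (μ σ s : ℝ) (hμ : 0 < μ) (hσ : 0 < σ) (hs : s ≠ 0) :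
    IntegrableOn (fun x : ℝ => weightedExpDensity μ σ s x) (Set.Ioi 0) ∧
    ∫ x in Set.Ioi (0 : ℝ), weightedExpDensity μ σ s x = 1 := by
  set C : ℝ := (μ * σ) ^ (μ + 1) / ((σ + 1) * Real.Gamma (μ + 1)) with hC
  set b : ℝ := μ * σ with hb
  have hbpos : 0 < b := mul_pos hμ hσ
  set g : ℝ → ℝ := fun y => C * ((1 + y) * (y ^ (μ - 1) * Real.exp (-(b * y)))) with hg
  -- key pointwise identity
  have hkey : ∀ x ∈ Set.Ioi (0 : ℝ),
      (|(-s)| * x ^ ((-s) - 1)) • g (x ^ (-s)) = weightedExpDensity μ σ s x := by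
    intro x hx
    have hx0 : 0 < x := hx
    have hxs : 0 < x ^ (-s) := Real.rpow_pos_of_pos hx0 _
    have h1 : (x ^ (-s)) ^ (μ - 1) = x ^ (-s * (μ - 1)) :=
      (Real.rpow_mul hx0.le _ _).symm
    rw [smul_eq_mul, hg]
    simp only [weightedExpDensity, h1]
    have h2 : x ^ ((-s) - 1) * x ^ (-s * (μ - 1)) = x ^ (-(s * μ)) / x := by
      rw [← Real.rpow_add hx0, div_eq_mul_inv, ← Real.rpow_neg_one x,
        ← Real.rpow_add hx0]
      ring_nf
    have h3 : Real.exp (-(b * x ^ (-s))) = Real.exp (-(μ * σ) * x ^ (-s)) := by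
      rw [hb]; ring_nf
    rw [abs_neg]
    rw [show |s| * x ^ ((-s) - 1) * (C * ((1 + x ^ (-s)) *
        (x ^ (-s * (μ - 1)) * Real.exp (-(b * x ^ (-s)))))) =
        C * (1 + x ^ (-s)) * |s| * (x ^ ((-s) - 1) * x ^ (-s * (μ - 1))) *
        Real.exp (-(b * x ^ (-s))) by ring, h2, h3, hC, hb]
    ring
  -- integrability of g
  have hg1 : IntegrableOn (fun y : ℝ => y ^ (μ - 1) * Real.exp (-(b * y))) (Set.Ioi 0) :=
    wed_aux_integrable b μ hbpos hμ
  have hg2 : IntegrableOn (fun y : ℝ => y ^ (μ + 1 - 1) * Real.exp (-(b * y))) (Set.Ioi 0) :=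
    wed_aux_integrable b (μ + 1) hbpos (by linarith)
  have hgeq : ∀ y ∈ Set.Ioi (0 : ℝ), g y
      = C * (y ^ (μ - 1) * Real.exp (-(b * y))) + C * (y ^ (μ + 1 - 1) * Real.exp (-(b * y))) := by
    intro y hy
    have hy0 : 0 < y := hy
    have : y ^ (μ + 1 - 1) = y * y ^ (μ - 1) := by
      rw [show μ + 1 - 1 = 1 + (μ - 1) by ring, Real.rpow_add hy0, Real.rpow_one]
    rw [hg, this]; ring
  have hgInt : IntegrableOn g (Set.Ioi 0) := by
    have hsum : IntegrableOn (fun y : ℝ => C * (y ^ (μ - 1) * Real.exp (-(b * y)))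
        + C * (y ^ (μ + 1 - 1) * Real.exp (-(b * y)))) (Set.Ioi 0) :=
      (hg1.const_mul C).add (hg2.const_mul C)
    exact hsum.congr_fun (fun y hy => (hgeq y hy).symm) measurableSet_Ioi
  have hsne : (-s) ≠ 0 := neg_ne_zero.mpr hs
  constructor
  · have := (integrableOn_Ioi_comp_rpow_iff g hsne).mpr hgInt
    exact this.congr_fun (fun x hx => hkey x hx) measurableSet_Ioi
  · have hint : ∫ x in Set.Ioi (0 : ℝ), weightedExpDensity μ σ s x
        = ∫ y in Set.Ioi (0 : ℝ), g y := by
      rw [← integral_comp_rpow_Ioi g hsne]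
      exact setIntegral_congr_fun measurableSet_Ioi (fun x hx => (hkey x hx).symm)
    rw [hint]
    have hsplit : ∫ y in Set.Ioi (0 : ℝ), g y
        = (C * ∫ y in Set.Ioi (0:ℝ), y ^ (μ - 1) * Real.exp (-(b * y)))
          + C * ∫ y in Set.Ioi (0:ℝ), y ^ (μ + 1 - 1) * Real.exp (-(b * y)) := by
      rw [← integral_const_mul, ← integral_const_mul,
        ← integral_add (hg1.const_mul C) (hg2.const_mul C)]
      exact setIntegral_congr_fun measurableSet_Ioi hgeq
    rw [hsplit, integral_rpow_mul_exp_neg_mul_Ioi hμ hbpos,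
      integral_rpow_mul_exp_neg_mul_Ioi (by linarith : (0:ℝ) < μ + 1) hbpos]
    -- final algebra
    have hΓ : Real.Gamma (μ + 1) = μ * Real.Gamma μ := Real.Gamma_add_one hμ.ne'
    have hΓpos : 0 < Real.Gamma μ := Real.Gamma_pos_of_pos hμ
    have h1b : (1 / b) ^ μ = b ^ (-μ) := by
      rw [one_div, Real.inv_rpow hbpos.le, ← Real.rpow_neg hbpos.le]
    have h1b' : (1 / b) ^ (μ + 1) = b ^ (-(μ + 1)) := by
      rw [one_div, Real.inv_rpow hbpos.le, ← Real.rpow_neg hbpos.le]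
    have hbb : b ^ (μ + 1) * b ^ (-μ) = b := by
      rw [← Real.rpow_add hbpos, show μ + 1 + -μ = 1 by ring, Real.rpow_one]
    have hbb' : b ^ (μ + 1) * b ^ (-(μ + 1)) = 1 := by
      rw [← Real.rpow_add hbpos, add_neg_cancel, Real.rpow_zero]
    rw [hC, hΓ, h1b, h1b', hb]
    field_simp
    rw [← hb, mul_add, hbb, mul_left_comm, hbb', hb]
    ring
end

section
/- Let μ > 0, σ > 0, let T be a real-valued function differentiable at a point x with T(x) > 0, and set f(x) = ((μσ)^{μ+1} / ((σ+1)·Γ(μ+1))) · (1 + T(x)) · (|T'(x)|/T(x)) · T(x)^{μ} · exp(−μσ·T(x)), f₁(x) = ((μσ)^{μ} / Γ(μ)) · |T'(x)| · T(x)^{μ−1} · exp(−μσ·T(x)), and f₂(x) = ((μσ)^{μ+1} / Γ(μ+1)) · |T'(x)| · T(x)^{μ} · exp(−μσ·T(x)). Then f(x) = (σ/(σ+1)) · f₁(x) + (1/(σ+1)) · f₂(x); that is, the weighted exponential-family density is the two-component mixture of f₁ and f₂ with weights σ/(σ+1) and 1/(σ+1). -/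
open Real

/-- The weighted exponential-family density is the two-component mixture of the
exponential-family densities `f₁` and `f₂` with weights `σ/(σ+1)` and `1/(σ+1)`. -/
theorem weightedExp_mixture_decomposition (μ σ : ℝ) (hμ : 0 < μ) (hσ : 0 < σ)
    (T : ℝ → ℝ) (x : ℝ) (hT : DifferentiableAt ℝ T x) (hTx : 0 < T x) :
    ((μ * σ) ^ (μ + 1) / ((σ + 1) * Real.Gamma (μ + 1))) * (1 + T x) * (|deriv T x| / T x) *
        (T x) ^ μ * Real.exp (-(μ * σ) * T x)
      = (σ / (σ + 1)) *
          (((μ * σ) ^ μ / Real.Gamma μ) * |deriv T x| * (T x) ^ (μ - 1) *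
            Real.exp (-(μ * σ) * T x))
        + (1 / (σ + 1)) *
          (((μ * σ) ^ (μ + 1) / Real.Gamma (μ + 1)) * |deriv T x| * (T x) ^ μ *
            Real.exp (-(μ * σ) * T x)) := by
  have ha : (0:ℝ) < μ * σ := mul_pos hμ hσ
  have hΓ : Real.Gamma (μ + 1) = μ * Real.Gamma μ := Real.Gamma_add_one (ne_of_gt hμ)
  have hΓμ : Real.Gamma μ ≠ 0 := Real.Gamma_ne_zero fun n => ne_of_gt (lt_of_le_of_lt (neg_nonpos.mpr n.cast_nonneg) hμ)
  have h1 : (μ * σ) ^ (μ + 1) = (μ * σ) ^ μ * (μ * σ) := Real.rpow_add_one (ne_of_gt ha) μ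
  have h2 : (T x) ^ μ = (T x) ^ (μ - 1) * T x := by
    rw [← Real.rpow_add_one (ne_of_gt hTx)]; ring_nf
  rw [hΓ, h1, h2]
  have hσ1 : σ + 1 ≠ 0 := by positivity
  field_simp
end

section
/- Let a > 0, λ > 0 and s ≠ 0. The pushforward of the Gamma distribution with shape a and rate λ under the map z ↦ z^{−1/s} is the measure on ℝ with Lebesgue density g(x) = (λ^a / Γ(a)) · |s| · x^{−sa−1} · exp(−λ·x^{−s}) for x > 0, and g(x) = 0 for x ≤ 0. -/
open MeasureTheory Real

/-- The Gamma distribution with shape `a` and rate `l`: the measure on `ℝ` with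
Lebesgue density `z ↦ (l^a/Γ(a)) · z^(a−1) · exp(−l·z)` on `(0,∞)` and `0` elsewhere. -/
noncomputable def gammaDist (a l : ℝ) : Measure ℝ :=
  volume.withDensity fun z =>
    ENNReal.ofReal (if 0 < z then l ^ a / Real.Gamma a * z ^ (a - 1) * Real.exp (-l * z) else 0)

/-- For `a > 0`, `l > 0` and `s ≠ 0`, the pushforward of the `Gamma(a, l)` distribution under
`z ↦ z^(−1/s)` has Lebesgue density `x ↦ (l^a/Γ(a)) · |s| · x^(−s·a−1) · exp(−l·x^(−s))` for
`x > 0` and `0` for `x ≤ 0`. -/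
theorem gammaDist_map_rpow_neg_inv (a l s : ℝ) (ha : 0 < a) (hl : 0 < l) (hs : s ≠ 0) :
    Measure.map (fun z : ℝ => z ^ (-1 / s)) (gammaDist a l)
      = volume.withDensity fun x =>
          ENNReal.ofReal
            (if 0 < x then l ^ a / Real.Gamma a * |s| * x ^ (-(s * a) - 1) *
              Real.exp (-l * x ^ (-s)) else 0) := by
  set φ : ℝ → ℝ := fun z => z ^ (-1 / s) with hφ
  set ψ : ℝ → ℝ := fun x => x ^ (-s) with hψ
  have hφm : Measurable φ := by fun_prop
  -- left inverse on positives
  have hφψ : ∀ x : ℝ, 0 < x → φ (ψ x) = x := by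
    intro x hx
    simp only [hφ, hψ]
    rw [← Real.rpow_mul hx.le]
    rw [show (-s) * (-1 / s) = 1 by field_simp, Real.rpow_one]
  have hψφ : ∀ z : ℝ, 0 < z → ψ (φ z) = z := by
    intro z hz
    simp only [hφ, hψ]
    rw [← Real.rpow_mul hz.le]
    rw [show (-1 / s) * (-s) = 1 by field_simp, Real.rpow_one]
  ext A hA
  rw [Measure.map_apply hφm hA, gammaDist, withDensity_apply _ (hφm hA),
    withDensity_apply _ hA]
  -- restrict both integrals to Ioi 0
  have key : ∀ (B : Set ℝ) (g : ℝ → ℝ),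
      ∫⁻ z in B, ENNReal.ofReal (if 0 < z then g z else 0)
        = ∫⁻ z in B ∩ Set.Ioi 0, ENNReal.ofReal (g z) := by
    intro B g
    rw [Set.inter_comm, ← Measure.restrict_restrict measurableSet_Ioi,
      ← lintegral_indicator measurableSet_Ioi]
    congr 1
    ext z
    by_cases hz : z ∈ Set.Ioi (0:ℝ)
    · simp [hz, Set.indicator_of_mem hz, Set.mem_Ioi.mp hz]
    · have hz' : ¬ (0 < z) := hz
      simp [Set.indicator_of_notMem hz, hz']
  rw [key, key]
  -- change of variables
  have himg : ψ '' (A ∩ Set.Ioi 0) = φ ⁻¹' A ∩ Set.Ioi 0 := by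
    ext z
    constructor
    · rintro ⟨x, ⟨hxA, hx⟩, rfl⟩
      have hx0 : (0:ℝ) < x := hx
      refine ⟨?_, Real.rpow_pos_of_pos hx0 _⟩
      simp only [Set.mem_preimage]
      rw [hφψ x hx0]; exact hxA
    · rintro ⟨hzA, hz⟩
      have hz0 : (0:ℝ) < z := hz
      exact ⟨φ z, ⟨hzA, Real.rpow_pos_of_pos hz0 _⟩, hψφ z hz0⟩
  have hinj : Set.InjOn ψ (A ∩ Set.Ioi 0) := by
    intro x hx y hy h
    have := congrArg φ h
    rwa [hφψ x hx.2, hφψ y hy.2] at this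
  have hderiv : ∀ x ∈ A ∩ Set.Ioi 0,
      HasFDerivWithinAt ψ
        ((1 : ℝ →L[ℝ] ℝ).smulRight (-s * x ^ (-s - 1))) (A ∩ Set.Ioi 0) x := by
    intro x hx
    have hx0 : (0:ℝ) < x := hx.2
    exact ((Real.hasDerivAt_rpow_const (Or.inl hx0.ne')).hasDerivWithinAt).hasFDerivWithinAt
  have hCoV := lintegral_image_eq_lintegral_abs_det_fderiv_mul volume
      (hA.inter measurableSet_Ioi) hderiv hinj
      (fun z => ENNReal.ofReal (l ^ a / Real.Gamma a * z ^ (a - 1) * Real.exp (-l * z)))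
  rw [himg] at hCoV
  rw [hCoV]
  apply setLIntegral_congr_fun (hA.inter measurableSet_Ioi)
  intro x hx
  beta_reduce
  have hx0 : (0:ℝ) < x := hx.2
  have hψx : (0:ℝ) < ψ x := Real.rpow_pos_of_pos hx0 _
  rw [ContinuousLinearMap.smulRight_one_eq_toSpanSingleton, ContinuousLinearMap.det_toSpanSingleton]
  rw [← ENNReal.ofReal_mul (abs_nonneg _)]
  congr 1
  have h1 : |(-s) * x ^ (-s - 1)| = |s| * x ^ (-s - 1) := by
    rw [abs_mul, abs_neg, abs_of_pos (Real.rpow_pos_of_pos hx0 _)]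
  have h2 : (x ^ (-s)) ^ (a - 1) = x ^ (-s * (a - 1)) := by
    rw [← Real.rpow_mul hx0.le]
  simp only [hψ]
  rw [h1, h2]
  have h3 : x ^ (-(s * a) - 1) = x ^ (-s - 1) * x ^ (-s * (a - 1)) := by
    rw [← Real.rpow_add hx0]
    ring_nf
  rw [h3]
  ring
end

section
/- For all μ > 0, σ > 0 and s ≠ 0, the function x ↦ log(x) · f_{μ,σ,s}(x) is integrable on (0, ∞) and ∫₀^∞ log(x) · f_{μ,σ,s}(x) dx = −(1/s) · (ψ(μ) − log(μσ) + 1/(μ(σ+1))). -/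
open MeasureTheory Real

open Set

lemma hasDerivAt_realGamma {a : ℝ} (ha : 0 < a) :
    HasDerivAt Real.Gamma (∫ t in Ioi (0:ℝ), t ^ (a-1) * (Real.log t * Real.exp (-t))) a := by
  have h1 := Complex.hasDerivAt_GammaIntegral (s := (a:ℂ)) (by simpa using ha)
  have hI : (∫ t : ℝ in Ioi 0, (t:ℂ) ^ ((a:ℂ) - 1) * (Real.log t * Real.exp (-t)))
      = ((∫ t in Ioi (0:ℝ), t ^ (a-1) * (Real.log t * Real.exp (-t)) : ℝ) : ℂ) := by
    have : (∫ t : ℝ in Ioi 0, (t:ℂ) ^ ((a:ℂ) - 1) * (Real.log t * Real.exp (-t)))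
        = ∫ t in Ioi (0:ℝ), ((t ^ (a-1) * (Real.log t * Real.exp (-t)) : ℝ) : ℂ) := by
      refine setIntegral_congr_fun measurableSet_Ioi (fun t ht => ?_)
      rw [show ((a:ℂ)-1) = ((a-1:ℝ):ℂ) by push_cast; ring,
        ← Complex.ofReal_cpow (le_of_lt ht)]
      push_cast
      ring
    rw [this]
    exact integral_ofReal
  rw [hI] at h1
  have h2 : HasDerivAt Complex.Gamma
      (((∫ t in Ioi (0:ℝ), t ^ (a-1) * (Real.log t * Real.exp (-t)) : ℝ) : ℂ)) (a:ℂ) := by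
    refine h1.congr_of_eventuallyEq ?_
    have hopen : IsOpen {z : ℂ | 0 < z.re} := isOpen_lt continuous_const Complex.continuous_re
    filter_upwards [hopen.mem_nhds (by simpa using ha)] with z hz
    exact Complex.Gamma_eq_integral hz
  have h3 := h2.real_of_complex
  simp only [Complex.ofReal_re] at h3
  exact h3.congr_of_eventuallyEq (by filter_upwards with x; rfl)

lemma integrableOn_rpow_exp {c b : ℝ} (hc : 0 < c) (hb : 0 < b) :
    IntegrableOn (fun t : ℝ => t ^ (c-1) * Real.exp (-(b*t))) (Ioi 0) := by
  have h0 := Real.GammaIntegral_convergent hc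
  have h1 : IntegrableOn (fun t : ℝ => Real.exp (-(b*t)) * (b*t) ^ (c-1)) (Ioi 0) := by
    have := (integrableOn_Ioi_comp_mul_left_iff
      (fun x : ℝ => Real.exp (-x) * x ^ (c-1)) 0 hb).mpr (by simpa using h0)
    simpa using this
  have h2 : IntegrableOn (fun t : ℝ => b ^ (1-c) * (Real.exp (-(b*t)) * (b*t) ^ (c-1))) (Ioi 0) :=
    h1.const_mul (b ^ (1-c))
  refine h2.congr_fun (fun t ht => ?_) measurableSet_Ioi
  have htp : (0:ℝ) < t := ht
  dsimp only
  rw [Real.mul_rpow hb.le htp.le,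
    show b ^ (1-c) * (Real.exp (-(b*t)) * (b^(c-1) * t^(c-1)))
      = (b^(1-c) * b^(c-1)) * (t^(c-1) * Real.exp (-(b*t))) from by ring,
    ← Real.rpow_add hb]
  norm_num

lemma log_le_rpow_aux {x ε : ℝ} (hx : 0 < x) (hε : 0 < ε) : Real.log x ≤ x ^ ε / ε := by
  have h1 : Real.log (x ^ ε) ≤ x ^ ε - 1 := by
    have := Real.log_le_sub_one_of_pos (Real.rpow_pos_of_pos hx ε)
    linarith
  rw [Real.log_rpow hx] at h1
  have : ε * Real.log x ≤ x ^ ε := by nlinarith [Real.rpow_pos_of_pos hx ε]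
  rw [le_div_iff₀ hε]
  nlinarith

lemma abs_log_le {t a : ℝ} (ht : 0 < t) (ha : 0 < a) :
    |Real.log t| ≤ (2/a) * (t ^ (a/2) + t ^ (-(a/2))) := by
  have hh : 0 < a/2 := by linarith
  rcases le_or_gt 1 t with h | h
  · rw [abs_of_nonneg (Real.log_nonneg h)]
    have := log_le_rpow_aux ht hh
    have h2 : (0:ℝ) < t ^ (-(a/2)) := Real.rpow_pos_of_pos ht _
    have h3 : t ^ (a/2) / (a/2) = (2/a) * t ^ (a/2) := by field_simp
    nlinarith [mul_pos (by positivity : (0:ℝ) < 2/a) h2]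
  · rw [abs_of_nonpos (Real.log_nonpos ht.le h.le)]
    have := log_le_rpow_aux (inv_pos.mpr ht) hh
    rw [Real.log_inv, Real.inv_rpow ht.le, ← Real.rpow_neg ht.le] at this
    have h2 : (0:ℝ) < t ^ (a/2) := Real.rpow_pos_of_pos ht _
    have h3 : t ^ (-(a/2)) / (a/2) = (2/a) * t ^ (-(a/2)) := by field_simp
    nlinarith [mul_pos (by positivity : (0:ℝ) < 2/a) h2]

lemma integrableOn_rpow_exp_log {a b : ℝ} (ha : 0 < a) (hb : 0 < b) :
    IntegrableOn (fun t : ℝ => t ^ (a-1) * Real.exp (-(b*t)) * Real.log t) (Ioi 0) := by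
  have hmeas : AEStronglyMeasurable (fun t : ℝ => t ^ (a-1) * Real.exp (-(b*t)) * Real.log t)
      (volume.restrict (Ioi 0)) := by
    refine ContinuousOn.aestronglyMeasurable ?_ measurableSet_Ioi
    refine ContinuousOn.mul (ContinuousOn.mul ?_ ?_) ?_
    · exact fun x hx => (Real.continuousAt_rpow_const x _ (Or.inl (ne_of_gt hx))).continuousWithinAt
    · exact (Real.continuous_exp.comp (continuous_const.mul continuous_id).neg).continuousOn
    · exact Real.continuousOn_log.mono (fun x hx => ne_of_gt hx)
  have hg : IntegrableOn (fun t : ℝ => (2/a) * (t ^ (3*a/2-1) * Real.exp (-(b*t))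
      + t ^ (a/2-1) * Real.exp (-(b*t)))) (Ioi 0) := by
    exact (((integrableOn_rpow_exp (by linarith : (0:ℝ) < 3*a/2) hb).add
      (integrableOn_rpow_exp (by linarith : (0:ℝ) < a/2) hb)).const_mul _)
  refine Integrable.mono' hg hmeas ?_
  rw [ae_restrict_iff' measurableSet_Ioi]
  filter_upwards with t ht
  have htp : (0:ℝ) < t := ht
  have h1 : 0 < t ^ (a-1) := Real.rpow_pos_of_pos htp _
  have h2 : 0 < Real.exp (-(b*t)) := Real.exp_pos _
  rw [Real.norm_eq_abs, abs_mul, abs_of_nonneg (by positivity : (0:ℝ) ≤ t ^ (a-1) * Real.exp (-(b*t)))]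
  have h3 := abs_log_le htp ha
  calc t ^ (a-1) * Real.exp (-(b*t)) * |Real.log t|
      ≤ t ^ (a-1) * Real.exp (-(b*t)) * ((2/a) * (t ^ (a/2) + t ^ (-(a/2)))) := by
        exact mul_le_mul_of_nonneg_left h3 (by positivity)
    _ = (2/a) * (t ^ (3*a/2-1) * Real.exp (-(b*t)) + t ^ (a/2-1) * Real.exp (-(b*t))) := by
        rw [show (3*a/2-1) = (a-1) + a/2 by ring, show (a/2-1) = (a-1) + -(a/2) by ring,
          Real.rpow_add htp, Real.rpow_add htp]
        ring

lemma integral_rpow_exp {a b : ℝ} (ha : 0 < a) (hb : 0 < b) :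
    ∫ t in Ioi (0:ℝ), t ^ (a-1) * Real.exp (-(b*t)) = Real.Gamma a * b ^ (-a) := by
  have h := integral_rpow_mul_exp_neg_mul_rpow (p := 1) (q := a - 1) (b := b)
    one_pos (by linarith) hb
  simp only [Real.rpow_one, neg_mul] at h ⊢
  rw [h]
  norm_num
  ring

lemma integral_rpow_exp_log {a b : ℝ} (ha : 0 < a) (hb : 0 < b) :
    ∫ t in Ioi (0:ℝ), t ^ (a-1) * Real.exp (-(b*t)) * Real.log t
      = (deriv Real.Gamma a - Real.Gamma a * Real.log b) * b ^ (-a) := by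
  have hD : (∫ t in Ioi (0:ℝ), t ^ (a-1) * Real.exp (-t) * Real.log t) = deriv Real.Gamma a := by
    rw [(hasDerivAt_realGamma ha).deriv]
    refine setIntegral_congr_fun measurableSet_Ioi (fun t _ => ?_)
    ring
  have hsub := integral_comp_mul_left_Ioi
    (fun y : ℝ => y ^ (a-1) * Real.exp (-y) * Real.log y) 0 hb
  rw [mul_zero] at hsub
  have hcong : ∫ x in Ioi (0:ℝ), (b*x) ^ (a-1) * Real.exp (-(b*x)) * Real.log (b*x)
      = ∫ x in Ioi (0:ℝ), (b ^ (a-1) * (x ^ (a-1) * Real.exp (-(b*x)) * Real.log x)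
          + (b ^ (a-1) * Real.log b) * (x ^ (a-1) * Real.exp (-(b*x)))) := by
    refine setIntegral_congr_fun measurableSet_Ioi (fun x hx => ?_)
    have hxp : (0:ℝ) < x := hx
    rw [Real.mul_rpow hb.le hxp.le, Real.log_mul hb.ne' hxp.ne']
    ring
  have hint : ∫ x in Ioi (0:ℝ), (b ^ (a-1) * (x ^ (a-1) * Real.exp (-(b*x)) * Real.log x)
          + (b ^ (a-1) * Real.log b) * (x ^ (a-1) * Real.exp (-(b*x))))
      = b ^ (a-1) * (∫ x in Ioi (0:ℝ), x ^ (a-1) * Real.exp (-(b*x)) * Real.log x)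
        + (b ^ (a-1) * Real.log b) * (∫ x in Ioi (0:ℝ), x ^ (a-1) * Real.exp (-(b*x))) := by
    rw [integral_add ((integrableOn_rpow_exp_log ha hb).const_mul _)
      ((integrableOn_rpow_exp ha hb).const_mul _), integral_const_mul, integral_const_mul]
  have key : b ^ (a-1) * (∫ x in Ioi (0:ℝ), x ^ (a-1) * Real.exp (-(b*x)) * Real.log x)
        + (b ^ (a-1) * Real.log b) * (Real.Gamma a * b ^ (-a))
      = b⁻¹ * deriv Real.Gamma a := by
    rw [← integral_rpow_exp ha hb, ← hint, ← hcong]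
    simp only [smul_eq_mul] at hsub
    rw [hsub, hD]
  set I := ∫ x in Ioi (0:ℝ), x ^ (a-1) * Real.exp (-(b*x)) * Real.log x
  have hb1 : b ^ (a-1) = b ^ a * b⁻¹ := by
    rw [← Real.rpow_neg_one b, ← Real.rpow_add hb]; ring_nf
  have hbn : b ^ (-a) = (b ^ a)⁻¹ := Real.rpow_neg hb.le a
  have hA : (0:ℝ) < b ^ a := Real.rpow_pos_of_pos hb a
  rw [hb1, hbn] at key
  rw [hbn]
  rw [show ((deriv Real.Gamma a - Real.Gamma a * Real.log b) * (b ^ a)⁻¹)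
    = (deriv Real.Gamma a - Real.Gamma a * Real.log b) / (b ^ a) from by ring,
    eq_div_iff hA.ne']
  field_simp at key
  have h2 : I * b ^ a * (b * (b * b ^ a))
      = (deriv Real.Gamma a - Real.Gamma a * Real.log b) * (b * (b * b ^ a)) := by
    linear_combination (b * (b * b ^ a)) * key
  exact mul_right_cancel₀ (by positivity) h2

lemma deriv_Gamma_succ {μ : ℝ} (hμ : 0 < μ) :
    deriv Real.Gamma (μ+1) = Real.Gamma μ + μ * deriv Real.Gamma μ := by
  have hne : ∀ x : ℝ, 0 < x → ∀ m : ℕ, x ≠ -m := fun x hx m =>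
    (lt_of_le_of_lt (neg_nonpos.mpr (Nat.cast_nonneg m)) hx).ne'
  have hd1 : HasDerivAt Real.Gamma (deriv Real.Gamma μ) μ :=
    (Real.differentiableAt_Gamma (hne μ hμ)).hasDerivAt
  have hd2 : HasDerivAt Real.Gamma (deriv Real.Gamma (μ+1)) (μ+1) :=
    (Real.differentiableAt_Gamma (hne (μ+1) (by linarith))).hasDerivAt
  have h1 : HasDerivAt (fun x : ℝ => x * Real.Gamma x)
      (1 * Real.Gamma μ + μ * deriv Real.Gamma μ) μ := (hasDerivAt_id μ).mul hd1
  have h2 : HasDerivAt (fun x : ℝ => Real.Gamma (x+1)) (deriv Real.Gamma (μ+1) * 1) μ :=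
    HasDerivAt.comp (h₂ := Real.Gamma) (h := fun x : ℝ => x + 1) μ hd2 ((hasDerivAt_id μ).add_const 1)
  have heq : (fun x : ℝ => Real.Gamma (x+1)) =ᶠ[nhds μ] (fun x : ℝ => x * Real.Gamma x) := by
    filter_upwards [eventually_ne_nhds hμ.ne'] with x hx
    rw [Real.Gamma_add_one hx]
  have h3 : HasDerivAt (fun x : ℝ => x * Real.Gamma x) (deriv Real.Gamma (μ+1) * 1) μ :=
    h2.congr_of_eventuallyEq heq.symm
  have := h3.unique h1
  linarith

/-- `E(Y₁*) = −(1/s)·(ψ(μ) − log(μσ) + 1/(μ(σ+1)))` for the weighted exponential family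
with generator `T(x) = x^(−s)`. -/
theorem weightedExp_expectation_log (μ σ s : ℝ) (hμ : 0 < μ) (hσ : 0 < σ) (hs : s ≠ 0) :
    IntegrableOn (fun x : ℝ => Real.log x * weightedExpDensity μ σ s x) (Set.Ioi 0) ∧
    ∫ x in Set.Ioi (0 : ℝ), Real.log x * weightedExpDensity μ σ s x
      = -(1 / s) * (digamma μ - Real.log (μ * σ) + 1 / (μ * (σ + 1))) := by
  have hp : (-s) ≠ 0 := neg_ne_zero.mpr hs
  have hb : (0:ℝ) < μ * σ := mul_pos hμ hσ
  have hΓ1 : (0:ℝ) < Real.Gamma (μ+1) := Real.Gamma_pos_of_pos (by linarith)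
  have hσp : (0:ℝ) < σ + 1 := by linarith
  set C : ℝ := (μ * σ) ^ (μ + 1) / ((σ + 1) * Real.Gamma (μ + 1)) with hCdef
  clear_value C
  set g : ℝ → ℝ := fun y => (-(C/s)) * (y ^ (μ-1) * Real.exp (-((μ*σ)*y)) * Real.log y)
      + (-(C/s)) * (y ^ ((μ+1)-1) * Real.exp (-((μ*σ)*y)) * Real.log y) with hgdef
  have hgint : IntegrableOn g (Ioi 0) :=
    ((integrableOn_rpow_exp_log hμ hb).const_mul _).add
      ((integrableOn_rpow_exp_log (by linarith : (0:ℝ) < μ+1) hb).const_mul _)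
  have hpt : ∀ x ∈ Ioi (0:ℝ), (|(-s)| * x ^ ((-s) - 1)) • g (x ^ (-s))
      = Real.log x * weightedExpDensity μ σ s x := by
    intro x hx
    have hx : (0:ℝ) < x := hx
    have hy : (0:ℝ) < x ^ (-s) := Real.rpow_pos_of_pos hx _
    have e1 : x ^ (-(s*μ)) = (x ^ (-s)) ^ (μ-1) * x ^ (-s) := by
      rw [← Real.rpow_mul hx.le, ← Real.rpow_add hx]
      ring_nf
    have e2 : (x ^ (-s)) ^ ((μ+1)-1) = (x ^ (-s)) ^ (μ-1) * x ^ (-s) := by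
      rw [show (μ+1)-1 = (μ-1)+1 from by ring, Real.rpow_add hy, Real.rpow_one]
    have e3 : x ^ ((-s)-1) = x ^ (-s) / x := by
      rw [Real.rpow_sub hx, Real.rpow_one]
    simp only [hgdef, weightedExpDensity, smul_eq_mul]
    rw [Real.log_rpow hx, e1, e2, e3, abs_neg]
    have hC2 : C * ((σ+1) * Real.Gamma (μ+1)) = (μ*σ) ^ (μ+1) := by
      rw [hCdef]; field_simp
    rw [← hC2]
    field_simp
  constructor
  · have h1 : IntegrableOn (fun x : ℝ => (|(-s)| * x ^ ((-s)-1)) • g (x ^ (-s))) (Ioi 0) :=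
      (integrableOn_Ioi_comp_rpow_iff g hp).mpr hgint
    exact h1.congr_fun hpt measurableSet_Ioi
  · rw [← setIntegral_congr_fun measurableSet_Ioi hpt, integral_comp_rpow_Ioi g hp]
    have hIg : ∫ y in Ioi (0:ℝ), g y
        = (-(C/s)) * ((deriv Real.Gamma μ - Real.Gamma μ * Real.log (μ*σ)) * (μ*σ) ^ (-μ))
          + (-(C/s)) * ((deriv Real.Gamma (μ+1) - Real.Gamma (μ+1) * Real.log (μ*σ))
              * (μ*σ) ^ (-(μ+1))) := by
      rw [hgdef]
      rw [integral_add ((integrableOn_rpow_exp_log hμ hb).const_mul _)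
        ((integrableOn_rpow_exp_log (by linarith : (0:ℝ) < μ+1) hb).const_mul _),
        integral_const_mul, integral_const_mul, integral_rpow_exp_log hμ hb,
        integral_rpow_exp_log (by linarith : (0:ℝ) < μ+1) hb]
    rw [hIg, deriv_Gamma_succ hμ]
    have hΓ : (0:ℝ) < Real.Gamma μ := Real.Gamma_pos_of_pos hμ
    have hB : (0:ℝ) < (μ*σ) ^ μ := Real.rpow_pos_of_pos hb μ
    have eb1 : (μ*σ) ^ (μ+1) = (μ*σ) ^ μ * (μ*σ) := by rw [Real.rpow_add hb, Real.rpow_one]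
    have eb2 : (μ*σ) ^ (-μ) = ((μ*σ) ^ μ)⁻¹ := Real.rpow_neg hb.le μ
    have eb3 : (μ*σ) ^ (-(μ+1)) = ((μ*σ) ^ μ * (μ*σ))⁻¹ := by
      rw [Real.rpow_neg hb.le, eb1]
    unfold digamma
    rw [hCdef, Real.Gamma_add_one hμ.ne', eb1, eb2, eb3]
    have hσ1 : (0:ℝ) < σ + 1 := by linarith
    field_simp
    ring
end

section
/- For all μ > 0, σ > 0 and s ≠ 0, the function x ↦ (−s·x^{−s}/(1 + x^{−s})) · log(x) · f_{μ,σ,s}(x) is integrable on (0, ∞) and ∫₀^∞ (−s·x^{−s}/(1 + x^{−s})) · log(x) · f_{μ,σ,s}(x) dx = (1/(σ+1)) · (ψ(μ) − log(μσ) + 1/μ). -/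
open MeasureTheory Real Set

lemma abs_log_le_s6 (y : ℝ) (hy : 0 < y) : |Real.log y| ≤ y + y⁻¹ := by
  rcases abs_cases (Real.log y) with ⟨h, _⟩ | ⟨h, _⟩
  · rw [h]
    have := Real.log_le_sub_one_of_pos hy
    nlinarith [inv_pos.mpr hy]
  · rw [h, ← Real.log_inv]
    have := Real.log_le_sub_one_of_pos (inv_pos.mpr hy)
    nlinarith [hy]

lemma integrable_rpow_log_exp {a : ℝ} (ha : 0 < a) :
    IntegrableOn (fun t : ℝ => t ^ (a - 1) * (Real.log t * Real.exp (-t))) (Set.Ioi 0) := by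
  have h1 := Real.GammaIntegral_convergent (by linarith : (0:ℝ) < a + a/2)
  have h2 := Real.GammaIntegral_convergent (by linarith : (0:ℝ) < a/2)
  have hF : IntegrableOn (fun t : ℝ =>
      (2/a) * (Real.exp (-t) * t ^ (a + a/2 - 1) + Real.exp (-t) * t ^ (a/2 - 1)))
      (Set.Ioi 0) := ((h1.add h2).const_mul _)
  refine hF.integrable.mono' ?_ ?_
  · apply ContinuousOn.aestronglyMeasurable ?_ measurableSet_Ioi
    intro t ht
    have ht0 : t ≠ 0 := (ne_of_gt ht)
    exact ((Real.continuousAt_rpow_const t _ (Or.inl ht0)).mul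
      ((Real.continuousAt_log ht0).mul (Real.continuous_exp.continuousAt.comp
        (continuousAt_neg)))).continuousWithinAt
  · rw [ae_restrict_iff' measurableSet_Ioi]
    filter_upwards with t ht
    have ht0 : (0:ℝ) < t := ht
    have hlog : |Real.log t| ≤ (2/a) * (t ^ (a/2) + t ^ (-(a/2))) := by
      have h := abs_log_le_s6 (t ^ (a/2)) (Real.rpow_pos_of_pos ht0 _)
      rw [Real.log_rpow ht0, abs_mul, abs_of_pos (by linarith : (0:ℝ) < a/2),
        ← Real.rpow_neg ht0.le] at h
      calc |Real.log t| = (2/a) * ((a/2) * |Real.log t|) := by field_simp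
        _ ≤ (2/a) * (t ^ (a/2) + t ^ (-(a/2))) :=
            mul_le_mul_of_nonneg_left h (by positivity)
    have he : (0:ℝ) < Real.exp (-t) := Real.exp_pos _
    have hr : (0:ℝ) < t ^ (a-1) := Real.rpow_pos_of_pos ht0 _
    calc ‖t ^ (a - 1) * (Real.log t * Real.exp (-t))‖
        = t ^ (a-1) * |Real.log t| * Real.exp (-t) := by
          rw [norm_eq_abs, abs_mul, abs_mul, abs_of_pos hr, abs_of_pos he]; ring
      _ ≤ t ^ (a-1) * ((2/a) * (t ^ (a/2) + t ^ (-(a/2)))) * Real.exp (-t) := by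
          apply mul_le_mul_of_nonneg_right (mul_le_mul_of_nonneg_left hlog hr.le) he.le
      _ = (2/a) * (Real.exp (-t) * (t ^ (a-1) * t ^ (a/2))
            + Real.exp (-t) * (t ^ (a-1) * t ^ (-(a/2)))) := by ring
      _ = (2/a) * (Real.exp (-t) * t ^ (a + a/2 - 1) + Real.exp (-t) * t ^ (a/2 - 1)) := by
          rw [← Real.rpow_add ht0, ← Real.rpow_add ht0,
            show a - 1 + a/2 = a + a/2 - 1 from by ring,
            show a - 1 + -(a/2) = a/2 - 1 from by ring]


lemma hasDerivAt_Gamma_real {a : ℝ} (ha : 0 < a) :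
    HasDerivAt Real.Gamma
      (∫ t in Ioi (0:ℝ), t ^ (a - 1) * (Real.log t * Real.exp (-t))) a := by
  have hre : (0:ℝ) < (a:ℂ).re := by simpa using ha
  have hc := Complex.hasDerivAt_GammaIntegral hre
  have heq : Complex.GammaIntegral =ᶠ[nhds (a:ℂ)] Complex.Gamma := by
    have : {z : ℂ | 0 < z.re} ∈ nhds (a:ℂ) :=
      (isOpen_Ioi.preimage Complex.continuous_re).mem_nhds hre
    filter_upwards [this] with z hz
    exact (Complex.Gamma_eq_integral hz).symm
  have hc2 : HasDerivAt Complex.Gamma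
      (∫ t : ℝ in Ioi 0, (t:ℂ) ^ ((a:ℂ) - 1) * (Real.log t * Real.exp (-t))) (a:ℂ) :=
    hc.congr_of_eventuallyEq heq.symm
  have hD : (∫ t : ℝ in Ioi 0, (t:ℂ) ^ ((a:ℂ) - 1) * (Real.log t * Real.exp (-t)))
      = ((∫ t in Ioi (0:ℝ), t ^ (a - 1) * (Real.log t * Real.exp (-t)) : ℝ) : ℂ) := by
    have h : (∫ t : ℝ in Ioi 0, (t:ℂ) ^ ((a:ℂ) - 1) * (Real.log t * Real.exp (-t)))
        = ∫ t : ℝ in Ioi 0, ((t ^ (a - 1) * (Real.log t * Real.exp (-t)) : ℝ) : ℂ) := by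
      refine setIntegral_congr_fun measurableSet_Ioi fun t ht => ?_
      have ht0 : (0:ℝ) < t := ht
      rw [Complex.ofReal_mul, Complex.ofReal_mul, Complex.ofReal_cpow ht0.le]
      push_cast
      ring
    have cc : ∀ r : ℝ, Complex.ofReal r = @RCLike.ofReal ℂ _ r := fun r => rfl
    rw [h]
    simp_rw [cc]
    rw [_root_.integral_ofReal]
  rw [hD] at hc2
  have h3 := hc2.real_of_complex
  simp only [Complex.ofReal_re] at h3
  exact h3.congr_of_eventuallyEq (Filter.Eventually.of_forall fun x => rfl)

lemma deriv_Gamma_add_one {a : ℝ} (ha : 0 < a) :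
    deriv Real.Gamma (a + 1) = Real.Gamma a + a * deriv Real.Gamma a := by
  have hdiff : ∀ x : ℝ, 0 < x → DifferentiableAt ℝ Real.Gamma x := fun x hx =>
    Real.differentiableAt_Gamma fun m =>
      ne_of_gt (lt_of_le_of_lt (neg_nonpos.mpr (Nat.cast_nonneg m)) hx)
  have h1 : HasDerivAt (fun x : ℝ => Real.Gamma (x + 1)) (deriv Real.Gamma (a+1) * 1) a :=
    by have h := (hdiff (a+1) (by linarith)).hasDerivAt.comp a ((hasDerivAt_id a).add_const 1); exact h
  have h2 : HasDerivAt (fun x : ℝ => x * Real.Gamma x)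
      (1 * Real.Gamma a + a * deriv Real.Gamma a) a :=
    (hasDerivAt_id a).mul (hdiff a ha).hasDerivAt
  have heq : (fun x : ℝ => Real.Gamma (x + 1)) =ᶠ[nhds a] fun x => x * Real.Gamma x := by
    filter_upwards [eventually_gt_nhds ha] with x hx
    exact Real.Gamma_add_one hx.ne'
  have h4 := (h2.congr_of_eventuallyEq heq).unique h1
  rw [mul_one, one_mul] at h4
  linarith

/-- `E(Y₃*) = (1/(σ+1))·(ψ(μ) − log(μσ) + 1/μ)` for the weighted exponential family with
generator `T(x) = x^(−s)`, where `Y₃* = T'(x)·x·log(x)/(1 + T(x))`. -/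
theorem weightedExp_expectation_Y3 (μ σ s : ℝ) (hμ : 0 < μ) (hσ : 0 < σ) (hs : s ≠ 0) :
    IntegrableOn
      (fun x : ℝ => (-s * x ^ (-s) / (1 + x ^ (-s))) * Real.log x * weightedExpDensity μ σ s x)
      (Set.Ioi 0) ∧
    ∫ x in Set.Ioi (0 : ℝ),
        (-s * x ^ (-s) / (1 + x ^ (-s))) * Real.log x * weightedExpDensity μ σ s x
      = (1 / (σ + 1)) * (digamma μ - Real.log (μ * σ) + 1 / μ) := by
  have hb : (0:ℝ) < μ * σ := mul_pos hμ hσ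
  have hμ1 : (0:ℝ) < μ + 1 := by linarith
  have hσ1 : (0:ℝ) < σ + 1 := by linarith
  have hΓpos : 0 < Real.Gamma (μ + 1) := Real.Gamma_pos_of_pos hμ1
  have hΓμ : 0 < Real.Gamma μ := Real.Gamma_pos_of_pos hμ
  set C : ℝ := (μ * σ) ^ (μ + 1) / ((σ + 1) * Real.Gamma (μ + 1)) with hC
  set G : ℝ → ℝ := fun v => C * (Real.log v * v ^ μ * Real.exp (-(μ * σ) * v)) with hGdef
  set K : ℝ → ℝ := fun t => C * (μ * σ) ^ (-μ) * (t ^ μ * (Real.log t * Real.exp (-t)))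
      - C * (μ * σ) ^ (-μ) * Real.log (μ * σ) * (Real.exp (-t) * t ^ μ) with hKdef
  have hp : (-s) ≠ 0 := neg_ne_zero.mpr hs
  -- pointwise identity
  have hpt : ∀ x ∈ Ioi (0:ℝ),
      (-s * x ^ (-s) / (1 + x ^ (-s))) * Real.log x * weightedExpDensity μ σ s x
        = (|(-s)| * x ^ ((-s) - 1)) • G (x ^ (-s)) := by
    intro x hx
    have hx0 : (0:ℝ) < x := hx
    have hu : (0:ℝ) < x ^ (-s) := Real.rpow_pos_of_pos hx0 _
    have h1 : x ^ (-(s * μ)) = (x ^ (-s)) ^ μ := by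
      rw [show -(s * μ) = (-s) * μ by ring, Real.rpow_mul hx0.le]
    have h2 : Real.log (x ^ (-s)) = -s * Real.log x := Real.log_rpow hx0 _
    have h3 : x ^ ((-s) - 1) = x ^ (-s) / x := by
      rw [Real.rpow_sub hx0, Real.rpow_one]
    have h1u : (0:ℝ) < 1 + x ^ (-s) := by linarith
    rw [smul_eq_mul, hGdef]
    simp only [weightedExpDensity]
    rw [h1, h2, h3, abs_neg, ← hC]
    field_simp
  -- integrability of K
  have hI1 := integrable_rpow_log_exp hμ1
  have hI2 := Real.GammaIntegral_convergent hμ1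
  simp only [add_sub_cancel_right] at hI1 hI2
  have hIK : IntegrableOn K (Ioi 0) :=
    (hI1.const_mul (C * (μ * σ) ^ (-μ))).sub
      (hI2.const_mul (C * (μ * σ) ^ (-μ) * Real.log (μ * σ)))
  -- K (b x) = G x on Ioi 0
  have hbb : (μ * σ) ^ (-μ) * (μ * σ) ^ μ = 1 := by
    rw [← Real.rpow_add hb]; simp
  have hGK : ∀ x ∈ Ioi (0:ℝ), (fun x => K ((μ * σ) * x)) x = G x := by
    intro x hx
    have hx0 : (0:ℝ) < x := hx
    simp only [hKdef, hGdef]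
    rw [Real.mul_rpow hb.le hx0.le, Real.log_mul hb.ne' hx0.ne',
      show -((μ*σ)*x) = -(μ*σ)*x by ring]
    calc C * (μ*σ) ^ (-μ) * ((μ*σ) ^ μ * x ^ μ * ((Real.log (μ*σ) + Real.log x) *
            Real.exp (-(μ*σ) * x)))
          - C * (μ*σ) ^ (-μ) * Real.log (μ*σ) * (Real.exp (-(μ*σ) * x) * ((μ*σ) ^ μ * x ^ μ))
        = ((μ*σ) ^ (-μ) * (μ*σ) ^ μ) * (C * (Real.log x * x ^ μ * Real.exp (-(μ*σ) * x))) := by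
          ring
      _ = C * (Real.log x * x ^ μ * Real.exp (-(μ*σ) * x)) := by rw [hbb, one_mul]
  have hIG : IntegrableOn G (Ioi 0) := by
    have h' : IntegrableOn (fun x => K ((μ * σ) * x)) (Ioi 0) := by
      rw [integrableOn_Ioi_comp_mul_left_iff K 0 hb, mul_zero]; exact hIK
    exact h'.congr_fun hGK measurableSet_Ioi
  have hmain : IntegrableOn
      (fun x : ℝ => (-s * x ^ (-s) / (1 + x ^ (-s))) * Real.log x * weightedExpDensity μ σ s x)
      (Set.Ioi 0) := by
    have h0 : IntegrableOn (fun x : ℝ => (|(-s)| * x ^ ((-s) - 1)) • G (x ^ (-s))) (Ioi 0) :=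
      (integrableOn_Ioi_comp_rpow_iff G hp).mpr hIG
    exact h0.congr_fun (fun x hx => (hpt x hx).symm) measurableSet_Ioi
  refine ⟨hmain, ?_⟩
  -- derivative value
  have hderiv_eq : deriv Real.Gamma (μ + 1)
      = ∫ t in Ioi (0:ℝ), t ^ μ * (Real.log t * Real.exp (-t)) := by
    have h := (hasDerivAt_Gamma_real hμ1).deriv
    simpa only [add_sub_cancel_right] using h
  have hIK1 : ∫ t in Ioi (0:ℝ), K t
      = C * (μ*σ) ^ (-μ) * deriv Real.Gamma (μ+1)
        - C * (μ*σ) ^ (-μ) * Real.log (μ*σ) * Real.Gamma (μ+1) := by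
    simp only [hKdef]
    have hGint : Real.Gamma (μ + 1) = ∫ x in Ioi (0:ℝ), Real.exp (-x) * x ^ μ := by
      simpa only [add_sub_cancel_right] using Real.Gamma_eq_integral hμ1
    rw [integral_sub (hI1.const_mul _) (hI2.const_mul _), MeasureTheory.integral_const_mul,
      MeasureTheory.integral_const_mul, hderiv_eq, hGint]
  have hstep : ∫ x in Set.Ioi (0:ℝ),
        (-s * x ^ (-s) / (1 + x ^ (-s))) * Real.log x * weightedExpDensity μ σ s x
      = (μ*σ)⁻¹ * ∫ t in Ioi (0:ℝ), K t := by
    calc ∫ x in Set.Ioi (0:ℝ),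
          (-s * x ^ (-s) / (1 + x ^ (-s))) * Real.log x * weightedExpDensity μ σ s x
        = ∫ x in Ioi (0:ℝ), (|(-s)| * x ^ ((-s) - 1)) • G (x ^ (-s)) :=
          setIntegral_congr_fun measurableSet_Ioi hpt
      _ = ∫ y in Ioi (0:ℝ), G y := integral_comp_rpow_Ioi G hp
      _ = ∫ x in Ioi (0:ℝ), K ((μ*σ) * x) :=
          (setIntegral_congr_fun measurableSet_Ioi hGK).symm
      _ = (μ*σ)⁻¹ • ∫ t in Ioi ((μ*σ) * 0), K t := integral_comp_mul_left_Ioi K 0 hb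
      _ = (μ*σ)⁻¹ * ∫ t in Ioi (0:ℝ), K t := by rw [mul_zero, smul_eq_mul]
  rw [hstep, hIK1]
  -- final algebra
  have hpow : (μ*σ) ^ (μ+1) * (μ*σ) ^ (-μ) = μ * σ := by
    rw [← Real.rpow_add hb, show μ + 1 + -μ = 1 by ring, Real.rpow_one]
  have hCb : C * (μ*σ) ^ (-μ) = (μ*σ) / ((σ+1) * Real.Gamma (μ+1)) := by
    rw [hC, div_mul_eq_mul_div, hpow]
  rw [hCb, deriv_Gamma_add_one hμ, Real.Gamma_add_one hμ.ne', digamma]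
  field_simp
  ring
end

section
/- For all μ > 0, σ > 0 and s ≠ 0, the function x ↦ x^{−s} · f_{μ,σ,s}(x) is integrable on (0, ∞) and ∫₀^∞ x^{−s} · f_{μ,σ,s}(x) dx = (1/(σ+1)) · (1 + (μ+1)/(μσ)). -/
open MeasureTheory Real

/-- `E(Y₆*) = (1/(σ+1))·(1 + (μ+1)/(μσ))` for the weighted exponential family with generator
`T(x) = x^(−s)`, where `Y₆* = T(x) = x^(−s)`. -/
theorem weightedExp_expectation_Y6 (μ σ s : ℝ) (hμ : 0 < μ) (hσ : 0 < σ) (hs : s ≠ 0) :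
    IntegrableOn (fun x : ℝ => x ^ (-s) * weightedExpDensity μ σ s x) (Set.Ioi 0) ∧
    ∫ x in Set.Ioi (0 : ℝ), x ^ (-s) * weightedExpDensity μ σ s x
      = (1 / (σ + 1)) * (1 + (μ + 1) / (μ * σ)) := by
  set a : ℝ := μ * σ with ha_def
  have ha : 0 < a := mul_pos hμ hσ
  set C : ℝ := a ^ (μ + 1) / ((σ + 1) * Real.Gamma (μ + 1)) with hC_def
  set g : ℝ → ℝ := fun t => C * ((1 + t) * t ^ μ * Real.exp (-a * t)) with hg_def
  have hp : (-s : ℝ) ≠ 0 := neg_ne_zero.mpr hs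
  -- the integrand equals the rpow-substitution form on Ioi 0
  have hcong : ∀ x ∈ Set.Ioi (0 : ℝ),
      x ^ (-s) * weightedExpDensity μ σ s x
        = (|(-s)| * x ^ ((-s) - 1)) • g (x ^ (-s)) := by
    intro x hx
    have hx0 : (0 : ℝ) < x := hx
    have h1 : x ^ ((-s) - 1) = x ^ (-s) / x := by
      rw [Real.rpow_sub hx0, Real.rpow_one]
    have h2 : (x ^ (-s)) ^ μ = x ^ (-(s * μ)) := by
      rw [← Real.rpow_mul hx0.le]; ring_nf
    simp only [weightedExpDensity, hg_def, smul_eq_mul, h1, h2, abs_neg]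
    ring
  -- integrability of g on Ioi 0
  have hint_g : IntegrableOn g (Set.Ioi 0) := by
    have i1 : IntegrableOn (fun t : ℝ => t ^ μ * Real.exp (-a * t)) (Set.Ioi 0) := by
      have := integrableOn_rpow_mul_exp_neg_mul_rpow (by linarith : (-1:ℝ) < μ) zero_lt_one ha
      refine this.congr_fun (fun t ht => ?_) measurableSet_Ioi
      simp only [Real.rpow_one]
    have i2 : IntegrableOn (fun t : ℝ => t ^ (μ + 1) * Real.exp (-a * t)) (Set.Ioi 0) := by
      have := integrableOn_rpow_mul_exp_neg_mul_rpow (by linarith : (-1:ℝ) < μ + 1) zero_lt_one ha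
      refine this.congr_fun (fun t ht => ?_) measurableSet_Ioi
      simp only [Real.rpow_one]
    have hsum : IntegrableOn
        (fun t : ℝ => C * (t ^ μ * Real.exp (-a * t)) + C * (t ^ (μ + 1) * Real.exp (-a * t)))
        (Set.Ioi 0) := (i1.const_mul C).add (i2.const_mul C)
    refine hsum.congr_fun (fun t ht => ?_) measurableSet_Ioi
    have ht0 : (0 : ℝ) < t := ht
    have h3 : t ^ (μ + 1) = t ^ μ * t := by
      rw [Real.rpow_add ht0, Real.rpow_one]
    simp only [hg_def, h3]
    ring
  -- integrability of the integrand
  have hint : IntegrableOn (fun x : ℝ => x ^ (-s) * weightedExpDensity μ σ s x) (Set.Ioi 0) := by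
    have := (integrableOn_Ioi_comp_rpow_iff g hp).mpr hint_g
    exact this.congr_fun (fun x hx => (hcong x hx).symm) measurableSet_Ioi
  refine ⟨hint, ?_⟩
  -- compute the integral
  have hΓ : 0 < Real.Gamma (μ + 1) := Real.Gamma_pos_of_pos (by linarith)
  have e1 : ∫ t in Set.Ioi (0:ℝ), t ^ μ * Real.exp (-a * t)
      = (1 / a) ^ (μ + 1) * Real.Gamma (μ + 1) := by
    rw [← Real.integral_rpow_mul_exp_neg_mul_Ioi (by linarith : (0:ℝ) < μ + 1) ha]
    refine setIntegral_congr_fun measurableSet_Ioi (fun t ht => ?_)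
    rw [add_sub_cancel_right, neg_mul]
  have e2 : ∫ t in Set.Ioi (0:ℝ), t ^ (μ + 1) * Real.exp (-a * t)
      = (1 / a) ^ (μ + 1 + 1) * Real.Gamma (μ + 1 + 1) := by
    rw [← Real.integral_rpow_mul_exp_neg_mul_Ioi (by linarith : (0:ℝ) < μ + 1 + 1) ha]
    refine setIntegral_congr_fun measurableSet_Ioi (fun t ht => ?_)
    rw [add_sub_cancel_right, neg_mul]
  calc ∫ x in Set.Ioi (0 : ℝ), x ^ (-s) * weightedExpDensity μ σ s x
      = ∫ x in Set.Ioi (0 : ℝ), (|(-s)| * x ^ ((-s) - 1)) • g (x ^ (-s)) :=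
        setIntegral_congr_fun measurableSet_Ioi hcong
    _ = ∫ y in Set.Ioi (0 : ℝ), g y := integral_comp_rpow_Ioi g hp
    _ = C * ((∫ t in Set.Ioi (0:ℝ), t ^ μ * Real.exp (-a * t))
          + ∫ t in Set.Ioi (0:ℝ), t ^ (μ + 1) * Real.exp (-a * t)) := by
        rw [← integral_add
          ((integrableOn_rpow_mul_exp_neg_mul_rpow (by linarith : (-1:ℝ) < μ) zero_lt_one ha).congr_fun
            (fun t ht => by simp only [Real.rpow_one]) measurableSet_Ioi)
          ((integrableOn_rpow_mul_exp_neg_mul_rpow (by linarith : (-1:ℝ) < μ+1) zero_lt_one ha).congr_fun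
            (fun t ht => by simp only [Real.rpow_one]) measurableSet_Ioi),
          ← integral_const_mul]
        refine setIntegral_congr_fun measurableSet_Ioi (fun t ht => ?_)
        have ht0 : (0 : ℝ) < t := ht
        have h3 : t ^ (μ + 1) = t ^ μ * t := by rw [Real.rpow_add ht0, Real.rpow_one]
        simp only [hg_def, h3]; ring
    _ = (1 / (σ + 1)) * (1 + (μ + 1) / (μ * σ)) := by
        rw [e1, e2]
        have hkey : a ^ (μ + 1) * (1 / a) ^ (μ + 1) = 1 := by
          rw [← Real.mul_rpow ha.le (by positivity), mul_one_div_cancel ha.ne', Real.one_rpow]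
        have hΓ2 : Real.Gamma (μ + 1 + 1) = (μ + 1) * Real.Gamma (μ + 1) :=
          Real.Gamma_add_one (by linarith)
        have h4 : (1 / a : ℝ) ^ (μ + 1 + 1) = (1 / a) ^ (μ + 1) * (1 / a) := by
          rw [Real.rpow_add (by positivity), Real.rpow_one]
        rw [hΓ2, h4, hC_def, ← ha_def]
        field_simp
        linear_combination hkey
end

section
/- Let μ > 0, σ > 0 and s ≠ 0, and let e₁, …, e₆ be the expectation values of the sufficient statistics defined from K = ψ(μ) − log(μσ). Then σ·e₅ − e₄ ≠ 0 and (1 + e₁ + e₂ + e₃ − e₄) / (σ·e₅ − e₄) = μ. In particular, g₂(E(Y)) = μ for the weighted exponential family with generator T(x) = x^{−s}, establishing the second half of the consistency theorem. -/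
open Real Set

private lemma diff_logGamma {x : ℝ} (hx : 0 < x) :
    DifferentiableAt ℝ (Real.log ∘ Real.Gamma) x := by
  refine (Real.differentiableAt_Gamma ?_).log (Real.Gamma_ne_zero ?_) <;>
    exact fun m ↦ ne_of_gt (by have := (Nat.cast_nonneg m : (0:ℝ) ≤ m); linarith)

private lemma deriv_logGamma {x : ℝ} (hx : 0 < x) :
    deriv (Real.log ∘ Real.Gamma) x = digamma x := by
  rw [Function.comp_def, deriv.log (Real.differentiableAt_Gamma fun m ↦ ne_of_gt (by have := (Nat.cast_nonneg m : (0:ℝ) ≤ m); linarith))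
    (Real.Gamma_pos_of_pos hx).ne', digamma]

private lemma digamma_lb {x : ℝ} (hx : 0 < x) : Real.log x - 1 / x ≤ digamma x := by
  set f := Real.log ∘ Real.Gamma with hf
  have hc : ConvexOn ℝ (Ioi 0) f := Real.convexOn_log_Gamma
  have h_rec (y : ℝ) (hy : 0 < y) : f (y + 1) = f y + Real.log y := by
    simp only [hf, Function.comp_apply, Real.Gamma_add_one hy.ne',
      Real.log_mul hy.ne' (Real.Gamma_pos_of_pos hy).ne', add_comm]
  -- derivative recurrence: deriv f (x+1) = deriv f x + 1/x
  have hder_rec : deriv f (x + 1) = deriv f x + 1 / x := by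
    rw [← deriv_comp_add_const, one_div, ← Real.deriv_log,
      ← deriv_add (diff_logGamma hx) (Real.differentiableAt_log hx.ne')]
    apply Filter.EventuallyEq.deriv_eq
    filter_upwards [eventually_gt_nhds hx] using h_rec
  -- convexity lower bound: log x ≤ deriv f (x+1)
  have hLB : Real.log x ≤ deriv f (x + 1) := by
    refine (le_of_eq ?_).trans <| hc.slope_le_deriv (mem_Ioi.mpr hx)
      (by positivity : (0:ℝ) < x + 1) (by linarith) (diff_logGamma (by positivity))
    rw [slope_def_field, show x + 1 - x = (1 : ℝ) by ring, div_one, h_rec x hx,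
      add_sub_cancel_left]
  have := hLB
  rw [hder_rec, deriv_logGamma hx] at this
  linarith

/-- With `e₁, …, e₆` the expectations of the sufficient statistics of the weighted exponential
family with generator `T(x) = x^(−s)` (defined from `K = ψ(μ) − log(μσ)`), we have
`σ·e₅ − e₄ ≠ 0` and `(1 + e₁ + e₂ + e₃ − e₄)/(σ·e₅ − e₄) = μ`, i.e. `g₂(E(Y)) = μ`. -/
theorem g2_of_expectations_eq_mu (μ σ s K e₁ e₂ e₃ e₄ e₅ e₆ : ℝ)
    (hμ : 0 < μ) (hσ : 0 < σ) (hs : s ≠ 0)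
    (hK : K = digamma μ - Real.log (μ * σ))
    (he₁ : e₁ = -(1 / s) * (K + 1 / (μ * (σ + 1))))
    (he₂ : e₂ = ((s + 1) / s) * (K + 1 / (μ * (σ + 1))))
    (he₃ : e₃ = (K + 1 / μ) / (σ + 1))
    (he₄ : e₄ = K + 1 / (μ * (σ + 1)))
    (he₅ : e₅ = (1 / (σ + 1)) * (1 + (μ + 1) / (μ * σ)) * (K + 1 / μ) + 1 / (μ * σ * (σ + 1)))
    (he₆ : e₆ = (1 / (σ + 1)) * (1 + (μ + 1) / (μ * σ))) :
    σ * e₅ - e₄ ≠ 0 ∧ (1 + e₁ + e₂ + e₃ - e₄) / (σ * e₅ - e₄) = μ := by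
  have hσ1 : (0:ℝ) < σ + 1 := by linarith
  -- Positivity of K + σ + 1 + 1/μ
  have hKpos : 0 < K + σ + 1 + 1 / μ := by
    have h1 : Real.log μ - 1 / μ ≤ digamma μ := digamma_lb hμ
    have h2 : Real.log σ ≤ σ - 1 := Real.log_le_sub_one_of_pos hσ
    have h3 : Real.log (μ * σ) = Real.log μ + Real.log σ := Real.log_mul hμ.ne' hσ.ne'
    have h4 : (0:ℝ) < 1 / μ := by positivity
    rw [hK, h3]
    linarith
  have hD : σ * e₅ - e₄ = (K + σ + 1 + 1 / μ) / (μ * (σ + 1)) := by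
    rw [he₄, he₅]; field_simp; ring
  have hDne : σ * e₅ - e₄ ≠ 0 := by
    rw [hD]; positivity
  refine ⟨hDne, ?_⟩
  have hN : 1 + e₁ + e₂ + e₃ - e₄ = μ * (σ * e₅ - e₄) := by
    rw [hD, he₁, he₂, he₃, he₄]; field_simp; ring
  rw [hN, mul_div_assoc, div_self hDne, mul_one]
end

section
/- Let μ > 0, σ > 0 and s ≠ 0, let e₁, …, e₆ be the expectation values of the sufficient statistics defined from K = ψ(μ) − log(μσ), and set Z = 1 + e₁ + e₂ + e₃ − e₄. Then Z > 0, e₆ > 0, (Z(1 − e₆) + e₅)² + 4·Z·e₆·(Z − e₄) ≥ 0, and σ = (Z(1 − e₆) + e₅ + √((Z(1 − e₆) + e₅)² + 4·Z·e₆·(Z − e₄))) / (2·Z·e₆). In particular, g₁(E(Y)) = σ for the weighted exponential family with generator T(x) = x^{−s}, establishing the first half of the consistency theorem. -/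
open Real

open Set in
lemma log_le_digamma_add_inv {x : ℝ} (hx : 0 < x) : Real.log x ≤ digamma x + 1 / x := by
  set f := Real.log ∘ Real.Gamma with hf
  have hc : ConvexOn ℝ (Ioi 0) f := Real.convexOn_log_Gamma
  have hne : ∀ {y : ℝ}, 0 < y → ∀ m : ℕ, y ≠ -m := by
    intro y hy m
    have : (0:ℝ) ≤ (m:ℝ) := Nat.cast_nonneg m
    exact ne_of_gt (by linarith)
  have hder : ∀ {y : ℝ}, 0 < y → DifferentiableAt ℝ f y := fun hy ↦
    ((Real.differentiableAt_Gamma (hne hy)).log (Real.Gamma_ne_zero (hne hy)))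
  have hderiv_eq : ∀ {y : ℝ}, 0 < y → deriv f y = digamma y := by
    intro y hy
    rw [hf, Function.comp_def,
      deriv.log (Real.differentiableAt_Gamma (hne hy))
        (Real.Gamma_pos_of_pos hy).ne', digamma]
  have h_rec : ∀ y : ℝ, 0 < y → f (y + 1) = f y + Real.log y := by
    intro y hy
    simp only [f, Function.comp_apply, Real.Gamma_add_one hy.ne',
      Real.log_mul hy.ne' (Real.Gamma_pos_of_pos hy).ne', add_comm]
  have hder_rec : deriv f (x + 1) = deriv f x + 1 / x := by
    rw [← deriv_comp_add_const, one_div, ← Real.deriv_log,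
      ← deriv_add (hder hx) (Real.differentiableAt_log hx.ne')]
    apply Filter.EventuallyEq.deriv_eq
    filter_upwards [eventually_gt_nhds hx] using h_rec
  have hslope : slope f x (x + 1) ≤ deriv f (x + 1) :=
    hc.slope_le_deriv (mem_Ioi.mpr hx) (by positivity : (0:ℝ) < x + 1) (by linarith)
      (hder (by positivity))
  rw [slope_def_field, show x + 1 - x = (1 : ℝ) by ring, div_one, h_rec x hx,
    add_sub_cancel_left] at hslope
  calc Real.log x ≤ deriv f (x + 1) := hslope
    _ = digamma x + 1 / x := by rw [hder_rec, hderiv_eq hx]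

set_option maxHeartbeats 1000000 in
/-- With `e₁, …, e₆` the expectations of the sufficient statistics of the weighted exponential
family with generator `T(x) = x^(−s)` (defined from `K = ψ(μ) − log(μσ)`) and
`Z = 1 + e₁ + e₂ + e₃ − e₄`, we have `Z > 0`, `e₆ > 0`, the discriminant
`(Z(1 − e₆) + e₅)² + 4·Z·e₆·(Z − e₄)` is nonnegative, and
`σ = (Z(1 − e₆) + e₅ + √((Z(1 − e₆) + e₅)² + 4·Z·e₆·(Z − e₄)))/(2·Z·e₆)`,
i.e. `g₁(E(Y)) = σ`. -/
theorem g1_of_expectations_eq_sigma (μ σ s K e₁ e₂ e₃ e₄ e₅ e₆ Z : ℝ)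
    (hμ : 0 < μ) (hσ : 0 < σ) (hs : s ≠ 0)
    (hK : K = digamma μ - Real.log (μ * σ))
    (he₁ : e₁ = -(1 / s) * (K + 1 / (μ * (σ + 1))))
    (he₂ : e₂ = ((s + 1) / s) * (K + 1 / (μ * (σ + 1))))
    (he₃ : e₃ = (K + 1 / μ) / (σ + 1))
    (he₄ : e₄ = K + 1 / (μ * (σ + 1)))
    (he₅ : e₅ = (1 / (σ + 1)) * (1 + (μ + 1) / (μ * σ)) * (K + 1 / μ) + 1 / (μ * σ * (σ + 1)))
    (he₆ : e₆ = (1 / (σ + 1)) * (1 + (μ + 1) / (μ * σ)))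
    (hZ : Z = 1 + e₁ + e₂ + e₃ - e₄) :
    0 < Z ∧ 0 < e₆ ∧
    0 ≤ (Z * (1 - e₆) + e₅) ^ 2 + 4 * Z * e₆ * (Z - e₄) ∧
    σ = (Z * (1 - e₆) + e₅ +
          Real.sqrt ((Z * (1 - e₆) + e₅) ^ 2 + 4 * Z * e₆ * (Z - e₄))) / (2 * Z * e₆) := by
  have ht : (0:ℝ) < σ + 1 := by linarith
  have hμσ : (0:ℝ) < μ * σ := by positivity
  -- lower bound on K + 1/μ from the digamma inequality
  have hA : -Real.log σ ≤ K + 1 / μ := by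
    have h1 := log_le_digamma_add_inv hμ
    rw [hK, Real.log_mul hμ.ne' hσ.ne']
    linarith
  have hlogσ : Real.log σ ≤ σ - 1 := Real.log_le_sub_one_of_pos hσ
  have hA' : 1 - σ ≤ K + 1 / μ := by linarith
  -- closed forms
  have hZval : Z = (σ + 1 + (K + 1 / μ)) / (σ + 1) := by
    rw [hZ, he₁, he₂, he₃, he₄]
    field_simp
    ring
  have hZpos : 0 < Z := by
    rw [hZval]
    apply div_pos _ ht
    linarith
  have he₆pos : 0 < e₆ := by rw [he₆]; positivity
  -- the quadratic identity: σ is a root of Z e₆ x² - B x - (Z - e₄)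
  have hquad : Z * e₆ * σ ^ 2 - (Z * (1 - e₆) + e₅) * σ - (Z - e₄) = 0 := by
    rw [hZval, he₄, he₅, he₆]
    field_simp
    ring
  have hD : (Z * (1 - e₆) + e₅) ^ 2 + 4 * Z * e₆ * (Z - e₄)
      = (2 * Z * e₆ * σ - (Z * (1 - e₆) + e₅)) ^ 2 := by
    linear_combination (-4 * Z * e₆) * hquad
  -- σ is the larger root
  have hnum : 2 * Z * e₆ * σ - (Z * (1 - e₆) + e₅)
      = ((σ + 1) * ((σ + 1) * (μ * σ + 2 * μ + 2) - (μ * σ + μ + 2)) + (K + 1 / μ) * σ)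
        / ((σ + 1) ^ 2 * (μ * σ)) := by
    rw [hZval, he₅, he₆]
    field_simp
    ring
  have hge : 0 ≤ 2 * Z * e₆ * σ - (Z * (1 - e₆) + e₅) := by
    rw [hnum]
    apply div_nonneg _ (by positivity)
    nlinarith [mul_nonneg (by linarith : (0:ℝ) ≤ K + 1 / μ - (1 - σ)) hσ.le,
      mul_pos (mul_pos (mul_pos hμ hσ) hσ) hσ, mul_pos (mul_pos hμ hσ) hσ,
      mul_pos hμ hσ, mul_pos hσ hσ]
  refine ⟨hZpos, he₆pos, by rw [hD]; positivity, ?_⟩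
  rw [hD, Real.sqrt_sq hge,
    show Z * (1 - e₆) + e₅ + (2 * Z * e₆ * σ - (Z * (1 - e₆) + e₅)) = σ * (2 * Z * e₆) from by
      ring]
  rw [mul_div_assoc, div_self (by positivity), mul_one]
end

section
/- Let z, y₄, y₅, y₆ be real numbers and let σ̂ > 0 satisfy z·y₆·σ̂² − (z(1 − y₆) + y₅)·σ̂ − (z − y₄) = 0. If σ̂·y₅ − y₄ ≠ 0 and μ̂ = z/(σ̂·y₅ − y₄), then (μ̂ + 1)/σ̂ − 1/(σ̂ + 1) − μ̂·y₆ = 0; that is, the pair (μ̂, σ̂) of closed-form estimators satisfies the likelihood score equation in σ for the weighted exponential family with a = b. -/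
/-- If `σ̂ > 0` is a root of the quadratic score equation
`z·y₆·σ̂² − (z(1 − y₆) + y₅)·σ̂ − (z − y₄) = 0`, `σ̂·y₅ − y₄ ≠ 0` and
`μ̂ = z/(σ̂·y₅ − y₄)`, then the pair `(μ̂, σ̂)` satisfies the likelihood score equation in `σ`
for the weighted exponential family with `a = b`:
`(μ̂ + 1)/σ̂ − 1/(σ̂ + 1) − μ̂·y₆ = 0`. -/
theorem muHat_sigmaHat_satisfy_score (z y₄ y₅ y₆ σHat μHat : ℝ) (hσpos : 0 < σHat)
    (hroot : z * y₆ * σHat ^ 2 - (z * (1 - y₆) + y₅) * σHat - (z - y₄) = 0)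
    (hden : σHat * y₅ - y₄ ≠ 0)
    (hμ : μHat = z / (σHat * y₅ - y₄)) :
    (μHat + 1) / σHat - 1 / (σHat + 1) - μHat * y₆ = 0 := by
  have hσ : σHat ≠ 0 := ne_of_gt hσpos
  have hσ1 : σHat + 1 ≠ 0 := by positivity
  subst hμ
  field_simp
  linear_combination -hroot
end

section
/- Let μ > 0, σ > 0, s ≠ 0, and let (Y_i)_{i≥1} be an i.i.d. sequence of random variables with distribution given by the density f_{μ,σ,s} on (0,∞). For each n, define the sample statistics Ȳ₁(n) = (1/n)·Σ_{i=1}^n log Y_i, Ȳ₃(n) = (1/n)·Σ_{i=1}^n (−s·Y_i^{−s}/(1 + Y_i^{−s}))·log Y_i, Ȳ₄(n) = −s·Ȳ₁(n), Ȳ₅(n) = (1/n)·Σ_{i=1}^n (−s·Y_i^{−s})·log Y_i, Ȳ₆(n) = (1/n)·Σ_{i=1}^n Y_i^{−s}, Z̄(n) = 1 + Ȳ₃(n), and the estimator σ̂_n = (Z̄(n)(1 − Ȳ₆(n)) + Ȳ₅(n) + √((Z̄(n)(1 − Ȳ₆(n)) + Ȳ₅(n))² + 4·Z̄(n)·Ȳ₆(n)·(Z̄(n)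 − Ȳ₄(n)))) / (2·Z̄(n)·Ȳ₆(n)). Then σ̂_n → σ almost surely as n → ∞; that is, the closed-form estimator σ̂ is strongly consistent. -/
open MeasureTheory Real Filter

/-- The probability measure on `ℝ` with density `f_{μ,σ,s}` on `(0,∞)` and `0` on `(−∞,0]`. -/
noncomputable def weightedExpMeasure (μ σ s : ℝ) : Measure ℝ :=
  volume.withDensity fun x =>
    ENNReal.ofReal (if 0 < x then weightedExpDensity μ σ s x else 0)

section SigmaHatAuxSection

open Set

namespace SigmaHatAux

/-! ### Elementary inequalities -/

lemma log_le_rpow_div {x ε : ℝ} (hx : 0 < x) (hε : 0 < ε) : Real.log x ≤ x ^ ε / ε := by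
  have h1 : Real.log (x ^ ε) ≤ x ^ ε - 1 := Real.log_le_sub_one_of_pos (rpow_pos_of_pos hx ε)
  rw [Real.log_rpow hx] at h1
  rw [le_div_iff₀ hε]; nlinarith [rpow_pos_of_pos hx ε]

lemma abs_log_le {x ε : ℝ} (hx : 0 < x) (hε : 0 < ε) :
    |Real.log x| ≤ (x ^ ε + x ^ (-ε)) / ε := by
  have h2 : (0:ℝ) < x ^ ε := rpow_pos_of_pos hx ε
  have h3 : (0:ℝ) < x ^ (-ε) := rpow_pos_of_pos hx (-ε)
  rcases abs_cases (Real.log x) with ⟨h, _⟩ | ⟨h, _⟩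
  · rw [h]
    calc Real.log x ≤ x ^ ε / ε := log_le_rpow_div hx hε
    _ ≤ (x ^ ε + x ^ (-ε)) / ε := div_le_div_of_nonneg_right (by linarith) hε.le |>.trans_eq rfl
  · rw [h]
    have hxe : (x⁻¹ : ℝ) ^ ε = x ^ (-ε) := by
      rw [← Real.rpow_neg_one, ← Real.rpow_mul hx.le]; ring_nf
    calc -Real.log x ≤ (x⁻¹) ^ ε / ε := by
          have := log_le_rpow_div (inv_pos.mpr hx) hε
          rwa [Real.log_inv] at this
    _ = x ^ (-ε) / ε := by rw [hxe]
    _ ≤ (x ^ ε + x ^ (-ε)) / ε := div_le_div_of_nonneg_right (by linarith) hε.le |>.trans_eq rfl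

/-- `log x ≤ x / e`, stated as `e⁻¹ * x`. -/
lemma log_le_exp_inv_mul {x : ℝ} (hx : 0 < x) : Real.log x ≤ (Real.exp 1)⁻¹ * x := by
  have hpos : (0:ℝ) < x * (Real.exp 1)⁻¹ := by positivity
  have h := Real.log_le_sub_one_of_pos hpos
  rw [Real.log_mul hx.ne' (by positivity), Real.log_inv, Real.log_exp, mul_comm] at h
  linarith

lemma neg_log_le {x : ℝ} (hx : 0 < x) : -Real.log x ≤ (Real.exp 1)⁻¹ * x⁻¹ := by
  have h := log_le_exp_inv_mul (inv_pos.mpr hx)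
  rw [Real.log_inv] at h
  linarith

/-! ### Gamma-type primitives -/

lemma integrableOn_rpow_exp {k r : ℝ} (hk : 0 < k) (hr : 0 < r) :
    IntegrableOn (fun t : ℝ => t ^ (k - 1) * Real.exp (-(r * t))) (Ioi 0) := by
  have h := integrableOn_rpow_mul_exp_neg_mul_rpow (by linarith : (-1:ℝ) < k - 1)
    (one_pos : (0:ℝ) < 1) hr
  apply h.congr_fun ?_ measurableSet_Ioi
  intro x hx
  simp only [Real.rpow_one, neg_mul]

lemma integral_rpow_exp {k r : ℝ} (hk : 0 < k) (hr : 0 < r) :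
    ∫ t in Ioi (0:ℝ), t ^ (k - 1) * Real.exp (-(r * t)) = (1 / r) ^ k * Real.Gamma k :=
  Real.integral_rpow_mul_exp_neg_mul_Ioi hk hr

lemma integrableOn_abs_log_rpow_exp {k r : ℝ} (hk : 0 < k) (hr : 0 < r) :
    IntegrableOn (fun t : ℝ => |Real.log t| * (t ^ (k - 1) * Real.exp (-(r * t)))) (Ioi 0) := by
  have h1 := integrableOn_rpow_exp (by linarith : (0:ℝ) < k/2) hr
  have h2 := integrableOn_rpow_exp (by linarith : (0:ℝ) < 3*k/2) hr
  have hmeas : AEStronglyMeasurable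
      (fun t : ℝ => |Real.log t| * (t ^ (k - 1) * Real.exp (-(r * t))))
      (volume.restrict (Ioi 0)) := by
    apply Measurable.aestronglyMeasurable
    exact (Real.measurable_log.abs.mul
      ((measurable_id.pow_const _).mul (Real.measurable_exp.comp (measurable_id.const_mul r).neg)))
  refine Integrable.mono' (((h1.add h2).const_mul (2/k))) hmeas ?_
  filter_upwards [self_mem_ae_restrict measurableSet_Ioi] with x hx
  have hx0 : (0:ℝ) < x := hx
  have hlog : |Real.log x| ≤ (x ^ (k/2) + x ^ (-(k/2))) / (k/2) := abs_log_le hx0 (by linarith)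
  have he : (0:ℝ) < Real.exp (-(r * x)) := Real.exp_pos _
  have hk1 : (0:ℝ) ≤ x ^ (k - 1) := (rpow_pos_of_pos hx0 _).le
  rw [Real.norm_eq_abs, abs_of_nonneg (by positivity)]
  have key : |Real.log x| * x ^ (k-1) ≤ (2/k) * (x ^ (k/2 - 1) + x ^ (3*k/2 - 1)) := by
    have e1 : x ^ (-(k/2)) * x ^ (k-1) = x ^ (k/2 - 1) := by
      rw [← Real.rpow_add hx0]; ring_nf
    have e2 : x ^ (k/2) * x ^ (k-1) = x ^ (3*k/2 - 1) := by
      rw [← Real.rpow_add hx0]; ring_nf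
    calc |Real.log x| * x ^ (k-1) ≤ ((x ^ (k/2) + x ^ (-(k/2))) / (k/2)) * x ^ (k-1) :=
          mul_le_mul_of_nonneg_right hlog hk1
    _ = (2/k) * (x ^ (k/2) * x ^ (k-1) + x ^ (-(k/2)) * x ^ (k-1)) := by ring
    _ = (2/k) * (x ^ (3*k/2 - 1) + x ^ (k/2 - 1)) := by rw [e1, e2]
    _ = (2/k) * (x ^ (k/2 - 1) + x ^ (3*k/2 - 1)) := by ring
  calc |Real.log x| * (x ^ (k - 1) * Real.exp (-(r * x)))
      = (|Real.log x| * x ^ (k-1)) * Real.exp (-(r * x)) := by ring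
    _ ≤ ((2/k) * (x ^ (k/2 - 1) + x ^ (3*k/2 - 1))) * Real.exp (-(r * x)) :=
        mul_le_mul_of_nonneg_right key he.le
    _ = 2/k * (x ^ (k/2 - 1) * Real.exp (-(r * x)) + x ^ (3*k/2 - 1) * Real.exp (-(r * x))) := by
        ring

lemma integrableOn_log_rpow_exp {k r : ℝ} (hk : 0 < k) (hr : 0 < r) :
    IntegrableOn (fun t : ℝ => Real.log t * (t ^ (k - 1) * Real.exp (-(r * t)))) (Ioi 0) := by
  refine Integrable.mono' (integrableOn_abs_log_rpow_exp hk hr) ?_ ?_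
  · apply Measurable.aestronglyMeasurable
    exact (Real.measurable_log.mul
      ((measurable_id.pow_const _).mul (Real.measurable_exp.comp (measurable_id.const_mul r).neg)))
  · filter_upwards [self_mem_ae_restrict measurableSet_Ioi] with x hx
    have hx0 : (0:ℝ) < x := hx
    rw [Real.norm_eq_abs, abs_mul]
    have : |x ^ (k - 1) * Real.exp (-(r * x))| = x ^ (k - 1) * Real.exp (-(r * x)) :=
      abs_of_nonneg (by positivity)
    rw [this]

lemma rpow_shift {t : ℝ} (ht : 0 < t) (k : ℝ) : t ^ (k + 1 - 1) = t ^ (k - 1) * t := by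
  rw [show k + 1 - 1 = (k - 1) + 1 by ring, Real.rpow_add_one ht.ne']

/-! ### The density of `T = X^{-s}` -/

/-- density `C (1+t) t^(μ-1) e^(-μσt)` of the pushforward variable. -/
noncomputable def tdens (μ σ t : ℝ) : ℝ :=
  ((μ * σ) ^ (μ + 1) / ((σ + 1) * Real.Gamma (μ + 1))) *
    ((1 + t) * (t ^ (μ - 1) * Real.exp (-(μ * σ * t))))

variable {μ σ : ℝ}

lemma measurable_tdens : Measurable (tdens μ σ) := by
  unfold tdens
  exact measurable_const.mul ((measurable_const.add measurable_id).mul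
    ((measurable_id.pow_const _).mul
      (Real.measurable_exp.comp (measurable_id.const_mul _).neg)))

section

variable (hμ : 0 < μ) (hσ : 0 < σ)
include hμ hσ

lemma Cpos : 0 < (μ * σ) ^ (μ + 1) / ((σ + 1) * Real.Gamma (μ + 1)) := by
  have h1 : (0:ℝ) < μ * σ := mul_pos hμ hσ
  have h2 : (0:ℝ) < Real.Gamma (μ + 1) := Real.Gamma_pos_of_pos (by linarith)
  positivity

lemma tdens_nonneg {t : ℝ} (ht : 0 < t) : 0 ≤ tdens μ σ t := by
  have := Cpos hμ hσ
  have h3 : (0:ℝ) < t ^ (μ - 1) := rpow_pos_of_pos ht _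
  have := Real.exp_pos (-(μ * σ * t))
  unfold tdens
  positivity

lemma tdens_decomp {t : ℝ} (ht : 0 < t) :
    tdens μ σ t = ((μ * σ) ^ (μ + 1) / ((σ + 1) * Real.Gamma (μ + 1))) *
      (t ^ (μ - 1) * Real.exp (-(μ * σ * t)) + t ^ (μ + 1 - 1) * Real.exp (-(μ * σ * t))) := by
  unfold tdens
  rw [rpow_shift ht]
  ring

lemma integrableOn_tdens : IntegrableOn (tdens μ σ) (Ioi 0) := by
  have hρ : (0:ℝ) < μ * σ := mul_pos hμ hσ
  have base : IntegrableOn (fun t : ℝ => ((μ * σ) ^ (μ + 1) / ((σ + 1) * Real.Gamma (μ + 1))) *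
      (t ^ (μ - 1) * Real.exp (-(μ * σ * t)) + t ^ (μ + 1 - 1) * Real.exp (-(μ * σ * t))))
      (Ioi 0) :=
    ((integrableOn_rpow_exp hμ hρ).add
      (integrableOn_rpow_exp (by linarith : (0:ℝ) < μ + 1) hρ)).const_mul _
  exact base.congr_fun (fun t ht => (tdens_decomp hμ hσ ht).symm) measurableSet_Ioi

lemma integral_tdens_eq_one : ∫ t in Ioi (0:ℝ), tdens μ σ t = 1 := by
  have hρ : (0:ℝ) < μ * σ := mul_pos hμ hσ
  rw [setIntegral_congr_fun measurableSet_Ioi (fun t ht => tdens_decomp hμ hσ ht),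
    integral_const_mul _ _,
    integral_add (integrableOn_rpow_exp hμ hρ)
      (integrableOn_rpow_exp (by linarith : (0:ℝ) < μ + 1) hρ),
    integral_rpow_exp hμ hρ, integral_rpow_exp (by linarith : (0:ℝ) < μ + 1) hρ]
  have hg : Real.Gamma (μ + 1) = μ * Real.Gamma μ := Real.Gamma_add_one hμ.ne'
  have hΓ : (0:ℝ) < Real.Gamma μ := Real.Gamma_pos_of_pos hμ
  have h1 : ((1:ℝ) / (μ * σ)) ^ μ = ((μ * σ) ^ μ)⁻¹ := by
    rw [one_div, ← Real.rpow_neg_one, ← Real.rpow_mul (by positivity), neg_one_mul,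
      Real.rpow_neg hρ.le]
  have h2 : ((1:ℝ) / (μ * σ)) ^ (μ + 1) = ((μ * σ) ^ μ * (μ * σ))⁻¹ := by
    rw [one_div, ← Real.rpow_neg_one, ← Real.rpow_mul (by positivity), neg_one_mul,
      Real.rpow_neg hρ.le, Real.rpow_add_one hρ.ne']
  have h3 : (μ * σ) ^ (μ + 1) = (μ * σ) ^ μ * (μ * σ) := Real.rpow_add_one hρ.ne' μ
  have h4 : (0:ℝ) < (μ * σ) ^ μ := rpow_pos_of_pos hρ _
  rw [hg, h1, h2, h3]
  field_simp

lemma integrableOn_mul_tdens : IntegrableOn (fun t => t * tdens μ σ t) (Ioi 0) := by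
  have hρ : (0:ℝ) < μ * σ := mul_pos hμ hσ
  have base : IntegrableOn (fun t : ℝ => ((μ * σ) ^ (μ + 1) / ((σ + 1) * Real.Gamma (μ + 1))) *
      (t ^ (μ + 1 - 1) * Real.exp (-(μ * σ * t)) + t ^ (μ + 2 - 1) * Real.exp (-(μ * σ * t))))
      (Ioi 0) :=
    ((integrableOn_rpow_exp (by linarith : (0:ℝ) < μ + 1) hρ).add
      (integrableOn_rpow_exp (by linarith : (0:ℝ) < μ + 2) hρ)).const_mul _
  refine base.congr_fun ?_ measurableSet_Ioi
  intro t ht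
  have h1 : t ^ (μ + 1 - 1) = t ^ (μ - 1) * t := rpow_shift ht μ
  have h2 : t ^ (μ + 2 - 1) = t ^ (μ - 1) * t * t := by
    rw [show μ + 2 - 1 = (μ - 1) + 1 + 1 by ring, Real.rpow_add_one ht.out.ne',
      Real.rpow_add_one ht.out.ne']
  simp only
  rw [h1, h2]
  unfold tdens
  ring

lemma integral_mul_tdens :
    μ * σ * (σ + 1) * ∫ t in Ioi (0:ℝ), t * tdens μ σ t = μ * σ + μ + 1 := by
  have hρ : (0:ℝ) < μ * σ := mul_pos hμ hσ
  have hdecomp : ∀ t ∈ Ioi (0:ℝ), t * tdens μ σ t =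
      ((μ * σ) ^ (μ + 1) / ((σ + 1) * Real.Gamma (μ + 1))) *
        (t ^ (μ + 1 - 1) * Real.exp (-(μ * σ * t)) + t ^ (μ + 2 - 1) * Real.exp (-(μ * σ * t))) := by
    intro t ht
    have h1 : t ^ (μ + 1 - 1) = t ^ (μ - 1) * t := rpow_shift ht μ
    have h2 : t ^ (μ + 2 - 1) = t ^ (μ - 1) * t * t := by
      rw [show μ + 2 - 1 = (μ - 1) + 1 + 1 by ring, Real.rpow_add_one ht.out.ne',
        Real.rpow_add_one ht.out.ne']
    rw [h1, h2]
    unfold tdens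
    ring
  rw [setIntegral_congr_fun measurableSet_Ioi hdecomp, integral_const_mul _ _,
    integral_add (integrableOn_rpow_exp (by linarith : (0:ℝ) < μ + 1) hρ)
      (integrableOn_rpow_exp (by linarith : (0:ℝ) < μ + 2) hρ),
    integral_rpow_exp (by linarith : (0:ℝ) < μ + 1) hρ,
    integral_rpow_exp (by linarith : (0:ℝ) < μ + 2) hρ]
  have hg2 : Real.Gamma (μ + 2) = (μ + 1) * Real.Gamma (μ + 1) := by
    rw [show μ + 2 = (μ + 1) + 1 by ring, Real.Gamma_add_one (by linarith : μ + 1 ≠ 0)]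
  have hΓ : (0:ℝ) < Real.Gamma (μ + 1) := Real.Gamma_pos_of_pos (by linarith)
  have h1 : ((1:ℝ) / (μ * σ)) ^ (μ + 1) = ((μ * σ) ^ μ * (μ * σ))⁻¹ := by
    rw [one_div, ← Real.rpow_neg_one, ← Real.rpow_mul (by positivity), neg_one_mul,
      Real.rpow_neg hρ.le, Real.rpow_add_one hρ.ne']
  have h2 : ((1:ℝ) / (μ * σ)) ^ (μ + 2) = ((μ * σ) ^ μ * (μ * σ) * (μ * σ))⁻¹ := by
    rw [one_div, ← Real.rpow_neg_one, ← Real.rpow_mul (by positivity), neg_one_mul,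
      Real.rpow_neg hρ.le, show μ + 2 = μ + 1 + 1 by ring, Real.rpow_add_one hρ.ne',
      Real.rpow_add_one hρ.ne']
  have h3 : (μ * σ) ^ (μ + 1) = (μ * σ) ^ μ * (μ * σ) := Real.rpow_add_one hρ.ne' μ
  have h4 : (0:ℝ) < (μ * σ) ^ μ := rpow_pos_of_pos hρ _
  rw [hg2, h1, h2, h3]
  field_simp
  ring

end

end SigmaHatAux

namespace SigmaHatAux

section logint

variable {μ σ : ℝ} (hμ : 0 < μ) (hσ : 0 < σ)
include hμ hσ

lemma integrableOn_log_tdens :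
    IntegrableOn (fun t => Real.log t * tdens μ σ t) (Ioi 0) := by
  have hρ : (0:ℝ) < μ * σ := mul_pos hμ hσ
  have base : IntegrableOn (fun t : ℝ => ((μ * σ) ^ (μ + 1) / ((σ + 1) * Real.Gamma (μ + 1))) *
      (Real.log t * (t ^ (μ - 1) * Real.exp (-(μ * σ * t))) +
        Real.log t * (t ^ (μ + 1 - 1) * Real.exp (-(μ * σ * t))))) (Ioi 0) :=
    ((integrableOn_log_rpow_exp hμ hρ).add
      (integrableOn_log_rpow_exp (by linarith : (0:ℝ) < μ + 1) hρ)).const_mul _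
  refine base.congr_fun ?_ measurableSet_Ioi
  intro t ht
  simp only
  rw [tdens_decomp hμ hσ ht]
  ring

lemma integrableOn_mul_log_tdens :
    IntegrableOn (fun t => t * Real.log t * tdens μ σ t) (Ioi 0) := by
  have hρ : (0:ℝ) < μ * σ := mul_pos hμ hσ
  have base : IntegrableOn (fun t : ℝ => ((μ * σ) ^ (μ + 1) / ((σ + 1) * Real.Gamma (μ + 1))) *
      (Real.log t * (t ^ (μ + 1 - 1) * Real.exp (-(μ * σ * t))) +
        Real.log t * (t ^ (μ + 2 - 1) * Real.exp (-(μ * σ * t))))) (Ioi 0) :=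
    ((integrableOn_log_rpow_exp (by linarith : (0:ℝ) < μ + 1) hρ).add
      (integrableOn_log_rpow_exp (by linarith : (0:ℝ) < μ + 2) hρ)).const_mul _
  refine base.congr_fun ?_ measurableSet_Ioi
  intro t ht
  have h1 : t ^ (μ + 1 - 1) = t ^ (μ - 1) * t := rpow_shift ht μ
  have h2 : t ^ (μ + 2 - 1) = t ^ (μ - 1) * t * t := by
    rw [show μ + 2 - 1 = (μ - 1) + 1 + 1 by ring, Real.rpow_add_one ht.out.ne',
      Real.rpow_add_one ht.out.ne']
  simp only
  rw [h1, h2]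
  unfold tdens
  ring

lemma ratio_tdens_eq {t : ℝ} (ht : t ∈ Ioi (0:ℝ)) :
    t / (1 + t) * Real.log t * tdens μ σ t =
      ((μ * σ) ^ (μ + 1) / ((σ + 1) * Real.Gamma (μ + 1))) *
        (Real.log t * (t ^ (μ + 1 - 1) * Real.exp (-(μ * σ * t)))) := by
  have ht0 : (0:ℝ) < t := ht
  have h1t : (1:ℝ) + t ≠ 0 := by positivity
  have h1 : t ^ (μ + 1 - 1) = t ^ (μ - 1) * t := rpow_shift ht0 μ
  rw [h1]
  unfold tdens
  field_simp

lemma integrableOn_ratio_tdens :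
    IntegrableOn (fun t => t / (1 + t) * Real.log t * tdens μ σ t) (Ioi 0) := by
  have hρ : (0:ℝ) < μ * σ := mul_pos hμ hσ
  have base : IntegrableOn (fun t : ℝ => ((μ * σ) ^ (μ + 1) / ((σ + 1) * Real.Gamma (μ + 1))) *
      (Real.log t * (t ^ (μ + 1 - 1) * Real.exp (-(μ * σ * t))))) (Ioi 0) :=
    ((integrableOn_log_rpow_exp (by linarith : (0:ℝ) < μ + 1) hρ)).const_mul _
  exact base.congr_fun (fun t ht => (ratio_tdens_eq hμ hσ ht).symm) measurableSet_Ioi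

lemma logratio_tdens_eq {t : ℝ} (ht : t ∈ Ioi (0:ℝ)) :
    Real.log t / (1 + t) * tdens μ σ t =
      ((μ * σ) ^ (μ + 1) / ((σ + 1) * Real.Gamma (μ + 1))) *
        (Real.log t * (t ^ (μ - 1) * Real.exp (-(μ * σ * t)))) := by
  have ht0 : (0:ℝ) < t := ht
  have h1t : (1:ℝ) + t ≠ 0 := by positivity
  unfold tdens
  field_simp

lemma integrableOn_logratio_tdens :
    IntegrableOn (fun t => Real.log t / (1 + t) * tdens μ σ t) (Ioi 0) := by
  have hρ : (0:ℝ) < μ * σ := mul_pos hμ hσ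
  have base : IntegrableOn (fun t : ℝ => ((μ * σ) ^ (μ + 1) / ((σ + 1) * Real.Gamma (μ + 1))) *
      (Real.log t * (t ^ (μ - 1) * Real.exp (-(μ * σ * t))))) (Ioi 0) :=
    ((integrableOn_log_rpow_exp hμ hρ)).const_mul _
  exact base.congr_fun (fun t ht => (logratio_tdens_eq hμ hσ ht).symm) measurableSet_Ioi

end logint

end SigmaHatAux

namespace SigmaHatAux

section stein

variable {μ σ : ℝ} (hμ : 0 < μ) (hσ : 0 < σ)
include hμ hσ

lemma stein_identity :
    1 + μ * (∫ t in Ioi (0:ℝ), Real.log t * tdens μ σ t)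
      + (∫ t in Ioi (0:ℝ), t / (1 + t) * Real.log t * tdens μ σ t)
      - μ * σ * (∫ t in Ioi (0:ℝ), t * Real.log t * tdens μ σ t) = 0 := by
  have hρ : (0:ℝ) < μ * σ := mul_pos hμ hσ
  set C : ℝ := (μ * σ) ^ (μ + 1) / ((σ + 1) * Real.Gamma (μ + 1)) with hC
  -- primitives
  have L1 := integrableOn_log_rpow_exp hμ hρ
  have L2 := integrableOn_log_rpow_exp (by linarith : (0:ℝ) < μ + 1) hρ
  have L3 := integrableOn_log_rpow_exp (by linarith : (0:ℝ) < μ + 2) hρ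
  have Q1 := integrableOn_rpow_exp hμ hρ
  have Q2 := integrableOn_rpow_exp (by linarith : (0:ℝ) < μ + 1) hρ
  set P1 : ℝ := ∫ t in Ioi (0:ℝ), Real.log t * (t ^ (μ - 1) * Real.exp (-(μ * σ * t))) with hP1
  set P2 : ℝ := ∫ t in Ioi (0:ℝ),
    Real.log t * (t ^ (μ + 1 - 1) * Real.exp (-(μ * σ * t))) with hP2
  set P3 : ℝ := ∫ t in Ioi (0:ℝ),
    Real.log t * (t ^ (μ + 2 - 1) * Real.exp (-(μ * σ * t))) with hP3
  set Qa : ℝ := ∫ t in Ioi (0:ℝ), t ^ (μ - 1) * Real.exp (-(μ * σ * t)) with hQa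
  set Qb : ℝ := ∫ t in Ioi (0:ℝ), t ^ (μ + 1 - 1) * Real.exp (-(μ * σ * t)) with hQb
  -- the function and its derivative
  set H : ℝ → ℝ := fun t => (1 + t) * t ^ μ * Real.log t * Real.exp (-(μ * σ * t)) with hH
  set Hd : ℝ → ℝ := fun t =>
    (Real.log t * (t ^ (μ + 1 - 1) * Real.exp (-(μ * σ * t)))
      + μ * (Real.log t * (t ^ (μ - 1) * Real.exp (-(μ * σ * t)))
          + Real.log t * (t ^ (μ + 1 - 1) * Real.exp (-(μ * σ * t))))
      + (t ^ (μ - 1) * Real.exp (-(μ * σ * t)) + t ^ (μ + 1 - 1) * Real.exp (-(μ * σ * t))))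
    - μ * σ * (Real.log t * (t ^ (μ + 1 - 1) * Real.exp (-(μ * σ * t)))
      + Real.log t * (t ^ (μ + 2 - 1) * Real.exp (-(μ * σ * t)))) with hHd
  have hintHd : IntegrableOn Hd (Ioi 0) := by
    exact ((L2.add ((L1.add L2).const_mul μ)).add (Q1.add Q2)).sub ((L2.add L3).const_mul (μ * σ))
  have hderiv : ∀ t ∈ Ioi (0:ℝ), HasDerivAt H (Hd t) t := by
    intro t ht
    have ht0 : (0:ℝ) < t := ht
    have h12 : HasDerivAt (fun y : ℝ => (1 + y) * y ^ μ)
        (1 * t ^ μ + (1 + t) * (μ * t ^ (μ - 1))) t :=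
      ((hasDerivAt_id t).const_add 1).mul (Real.hasDerivAt_rpow_const (Or.inl ht0.ne'))
    have h123 := h12.mul (Real.hasDerivAt_log ht0.ne')
    have hlin : HasDerivAt (fun y : ℝ => -(μ * σ * y)) (-(μ * σ)) t := by
      simpa [neg_mul] using (hasDerivAt_id t).const_mul (-(μ * σ))
    have h4 := hlin.exp
    have full := h123.mul h4
    have h0 : t ^ μ = t ^ (μ - 1) * t := by
      have := Real.rpow_add_one ht0.ne' (μ - 1)
      rwa [sub_add_cancel] at this
    have h1 : t ^ (μ + 1 - 1) = t ^ (μ - 1) * t := rpow_shift ht0 μ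
    have h2 : t ^ (μ + 2 - 1) = t ^ (μ - 1) * t * t := by
      rw [show μ + 2 - 1 = (μ - 1) + 1 + 1 by ring, Real.rpow_add_one ht0.ne',
        Real.rpow_add_one ht0.ne']
    refine full.congr_deriv ?_
    rw [hHd]
    simp only [Pi.mul_apply]
    rw [h0, h1, h2]
    field_simp
    ring
  have hH0 : H 0 = 0 := by
    rw [hH]
    simp [Real.zero_rpow hμ.ne']
  have hcont : ContinuousWithinAt H (Ici (0:ℝ)) 0 := by
    have hIoi : Tendsto H (nhdsWithin 0 (Ioi (0:ℝ))) (nhds 0) := by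
      have l1 : Tendsto (fun t : ℝ => Real.log t * t ^ μ) (nhdsWithin 0 (Ioi (0:ℝ)))
          (nhds 0) := tendsto_log_mul_rpow_nhdsGT_zero hμ
      have l2 : Tendsto (fun t : ℝ => (1 + t) * Real.exp (-(μ * σ * t)))
          (nhdsWithin 0 (Ioi (0:ℝ))) (nhds 1) := by
        have hc : Continuous (fun t : ℝ => (1 + t) * Real.exp (-(μ * σ * t))) := by
          continuity
        have := (hc.tendsto 0).mono_left (nhdsWithin_le_nhds (s := Ioi (0:ℝ)))
        simpa using this
      have := l2.mul l1
      rw [one_mul] at this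
      refine this.congr ?_
      intro t
      rw [hH]
      ring
    have hIci : Ici (0:ℝ) = Ioi 0 ∪ {0} := by
      ext x
      simp only [mem_Ici, mem_union, mem_Ioi, mem_singleton_iff]
      constructor
      · intro h
        rcases lt_or_eq_of_le h with h' | h'
        · exact Or.inl h'
        · exact Or.inr h'.symm
      · rintro (h | h)
        · exact le_of_lt h
        · exact h ▸ le_refl x
    unfold ContinuousWithinAt
    rw [hH0, hIci, nhdsWithin_union, tendsto_sup]
    constructor
    · exact hIoi
    · rw [nhdsWithin_singleton]
      simpa [hH0] using tendsto_pure_nhds H 0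
  have htop : Tendsto H atTop (nhds 0) := by
    have hg : Tendsto (fun t : ℝ => 2 * (t ^ (μ + 2) * Real.exp (-(μ * σ) * t))) atTop
        (nhds 0) := by
      have := (tendsto_rpow_mul_exp_neg_mul_atTop_nhds_zero (μ + 2) (μ * σ) hρ).const_mul 2
      simpa using this
    refine squeeze_zero_norm' ?_ hg
    filter_upwards [eventually_ge_atTop (1:ℝ)] with t ht
    have ht0 : (0:ℝ) < t := lt_of_lt_of_le one_pos ht
    have hlog0 : 0 ≤ Real.log t := Real.log_nonneg ht
    have hlogt : Real.log t ≤ t := by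
      have := Real.log_le_sub_one_of_pos ht0; linarith
    have hrp : (0:ℝ) < t ^ μ := rpow_pos_of_pos ht0 _
    have hexp : (0:ℝ) < Real.exp (-(μ * σ * t)) := Real.exp_pos _
    have hHval : ‖H t‖ = (1 + t) * t ^ μ * Real.log t * Real.exp (-(μ * σ * t)) := by
      rw [hH, Real.norm_eq_abs]
      apply abs_of_nonneg
      have h1t : (0:ℝ) ≤ 1 + t := by linarith
      positivity
    rw [hHval]
    have hsplit : t ^ (μ + 2) = t ^ μ * t * t := by
      rw [show μ + 2 = μ + 1 + 1 by ring, Real.rpow_add_one ht0.ne', Real.rpow_add_one ht0.ne']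
    have hmul : (1 + t) * Real.log t ≤ 2 * t * t :=
      mul_le_mul (by linarith) hlogt hlog0 (by linarith)
    have hexpeq : Real.exp (-(μ * σ) * t) = Real.exp (-(μ * σ * t)) := by ring_nf
    rw [hexpeq, hsplit]
    calc (1 + t) * t ^ μ * Real.log t * Real.exp (-(μ * σ * t))
        = ((1 + t) * Real.log t) * (t ^ μ * Real.exp (-(μ * σ * t))) := by ring
      _ ≤ (2 * t * t) * (t ^ μ * Real.exp (-(μ * σ * t))) :=
          mul_le_mul_of_nonneg_right hmul (by positivity)
      _ = 2 * (t ^ μ * t * t * Real.exp (-(μ * σ * t))) := by ring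
  have key : ∫ t in Ioi (0:ℝ), Hd t = 0 := by
    rw [integral_Ioi_of_hasDerivAt_of_tendsto hcont hderiv hintHd htop, hH0, sub_zero]
  -- expand ∫ Hd
  have e1 : ∫ t in Ioi (0:ℝ), Hd t
      = (P2 + μ * (P1 + P2) + (Qa + Qb)) - μ * σ * (P2 + P3) := by
    have i12 : Integrable (fun t : ℝ => Real.log t * (t ^ (μ - 1) * Real.exp (-(μ * σ * t)))
        + Real.log t * (t ^ (μ + 1 - 1) * Real.exp (-(μ * σ * t))))
        (volume.restrict (Ioi 0)) := L1.add L2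
    have iB : Integrable (fun t : ℝ =>
        μ * (Real.log t * (t ^ (μ - 1) * Real.exp (-(μ * σ * t)))
          + Real.log t * (t ^ (μ + 1 - 1) * Real.exp (-(μ * σ * t)))))
        (volume.restrict (Ioi 0)) := i12.const_mul μ
    have iAB : Integrable (fun t : ℝ =>
        Real.log t * (t ^ (μ + 1 - 1) * Real.exp (-(μ * σ * t)))
        + μ * (Real.log t * (t ^ (μ - 1) * Real.exp (-(μ * σ * t)))
          + Real.log t * (t ^ (μ + 1 - 1) * Real.exp (-(μ * σ * t)))))
        (volume.restrict (Ioi 0)) := L2.add iB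
    have iQ : Integrable (fun t : ℝ => t ^ (μ - 1) * Real.exp (-(μ * σ * t))
        + t ^ (μ + 1 - 1) * Real.exp (-(μ * σ * t))) (volume.restrict (Ioi 0)) := Q1.add Q2
    have iABQ : Integrable (fun t : ℝ =>
        Real.log t * (t ^ (μ + 1 - 1) * Real.exp (-(μ * σ * t)))
        + μ * (Real.log t * (t ^ (μ - 1) * Real.exp (-(μ * σ * t)))
          + Real.log t * (t ^ (μ + 1 - 1) * Real.exp (-(μ * σ * t))))
        + (t ^ (μ - 1) * Real.exp (-(μ * σ * t))
          + t ^ (μ + 1 - 1) * Real.exp (-(μ * σ * t)))) (volume.restrict (Ioi 0)) := iAB.add iQ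
    have i23 : Integrable (fun t : ℝ => Real.log t * (t ^ (μ + 1 - 1) * Real.exp (-(μ * σ * t)))
        + Real.log t * (t ^ (μ + 2 - 1) * Real.exp (-(μ * σ * t))))
        (volume.restrict (Ioi 0)) := L2.add L3
    have iD : Integrable (fun t : ℝ =>
        μ * σ * (Real.log t * (t ^ (μ + 1 - 1) * Real.exp (-(μ * σ * t)))
          + Real.log t * (t ^ (μ + 2 - 1) * Real.exp (-(μ * σ * t)))))
        (volume.restrict (Ioi 0)) := i23.const_mul (μ * σ)
    rw [hHd]
    rw [integral_sub iABQ iD, integral_add iAB iQ, integral_add L2 iB,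
      integral_const_mul _ _, integral_add L1 L2, integral_add Q1 Q2,
      integral_const_mul _ _, integral_add L2 L3]
  have hzero : (P2 + μ * (P1 + P2) + (Qa + Qb)) - μ * σ * (P2 + P3) = 0 := by
    rw [← e1]; exact key
  -- express the statistics integrals in terms of the primitives
  have ha : ∫ t in Ioi (0:ℝ), Real.log t * tdens μ σ t = C * (P1 + P2) := by
    have hdecomp : ∀ t ∈ Ioi (0:ℝ), Real.log t * tdens μ σ t =
        C * (Real.log t * (t ^ (μ - 1) * Real.exp (-(μ * σ * t)))
          + Real.log t * (t ^ (μ + 1 - 1) * Real.exp (-(μ * σ * t)))) := by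
      intro t ht
      rw [tdens_decomp hμ hσ ht]
      ring
    rw [setIntegral_congr_fun measurableSet_Ioi hdecomp, integral_const_mul _ _,
      integral_add L1 L2]
  have hd : ∫ t in Ioi (0:ℝ), t / (1 + t) * Real.log t * tdens μ σ t = C * P2 := by
    rw [setIntegral_congr_fun measurableSet_Ioi (fun t ht => ratio_tdens_eq hμ hσ ht),
      integral_const_mul _ _]
  have hb : ∫ t in Ioi (0:ℝ), t * Real.log t * tdens μ σ t = C * (P2 + P3) := by
    have hdecomp : ∀ t ∈ Ioi (0:ℝ), t * Real.log t * tdens μ σ t =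
        C * (Real.log t * (t ^ (μ + 1 - 1) * Real.exp (-(μ * σ * t)))
          + Real.log t * (t ^ (μ + 2 - 1) * Real.exp (-(μ * σ * t)))) := by
      intro t ht
      have ht0 : (0:ℝ) < t := ht
      have h1 : t ^ (μ + 1 - 1) = t ^ (μ - 1) * t := rpow_shift ht0 μ
      have h2 : t ^ (μ + 2 - 1) = t ^ (μ - 1) * t * t := by
        rw [show μ + 2 - 1 = (μ - 1) + 1 + 1 by ring, Real.rpow_add_one ht0.ne',
          Real.rpow_add_one ht0.ne']
      rw [h1, h2, hC]
      unfold tdens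
      ring
    rw [setIntegral_congr_fun measurableSet_Ioi hdecomp, integral_const_mul _ _,
      integral_add L2 L3]
  have hone : C * (Qa + Qb) = 1 := by
    have hdecomp : ∀ t ∈ Ioi (0:ℝ), tdens μ σ t =
        C * (t ^ (μ - 1) * Real.exp (-(μ * σ * t))
          + t ^ (μ + 1 - 1) * Real.exp (-(μ * σ * t))) := fun t ht => tdens_decomp hμ hσ ht
    have := integral_tdens_eq_one hμ hσ
    rw [setIntegral_congr_fun measurableSet_Ioi hdecomp, integral_const_mul _ _,
      integral_add Q1 Q2] at this
    exact this
  rw [ha, hd, hb, ← hone]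
  linear_combination C * hzero

end stein

end SigmaHatAux

namespace SigmaHatAux

section bounds

variable {μ σ : ℝ} (hμ : 0 < μ) (hσ : 0 < σ)
include hμ hσ

lemma ratio_integral_ge :
    -(Real.exp 1)⁻¹ ≤ ∫ t in Ioi (0:ℝ), t / (1 + t) * Real.log t * tdens μ σ t := by
  have he : (0:ℝ) < (Real.exp 1)⁻¹ := inv_pos.mpr (Real.exp_pos 1)
  have hpt : ∀ t ∈ Ioi (0:ℝ),
      -(Real.exp 1)⁻¹ * tdens μ σ t ≤ t / (1 + t) * Real.log t * tdens μ σ t := by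
    intro t ht
    have ht0 : (0:ℝ) < t := ht
    have h1t : (0:ℝ) < 1 + t := by linarith
    have hu : (0:ℝ) < (1 + t)⁻¹ := inv_pos.mpr h1t
    have hu1 : (1 + t)⁻¹ ≤ 1 := by
      rw [inv_le_one₀ h1t]; linarith
    have htd : 0 ≤ tdens μ σ t := tdens_nonneg hμ hσ ht0
    have hkey : -(Real.exp 1)⁻¹ ≤ t / (1 + t) * Real.log t := by
      have hlog : -Real.log t ≤ (Real.exp 1)⁻¹ * t⁻¹ := neg_log_le ht0
      have h1 : -(t * Real.log t) ≤ (Real.exp 1)⁻¹ := by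
        have h := mul_le_mul_of_nonneg_left hlog ht0.le
        have htt : t * t⁻¹ = 1 := mul_inv_cancel₀ ht0.ne'
        nlinarith [h, htt]
      rw [div_eq_mul_inv, mul_comm t (1+t)⁻¹, mul_assoc]
      have hp1 : 0 ≤ ((Real.exp 1)⁻¹ + t * Real.log t) * (1 + t)⁻¹ :=
        mul_nonneg (by linarith) hu.le
      have hp2 : 0 ≤ (Real.exp 1)⁻¹ * (1 - (1 + t)⁻¹) := mul_nonneg he.le (by linarith)
      nlinarith
    calc -(Real.exp 1)⁻¹ * tdens μ σ t ≤ (t / (1 + t) * Real.log t) * tdens μ σ t :=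
        mul_le_mul_of_nonneg_right hkey htd
    _ = t / (1 + t) * Real.log t * tdens μ σ t := by ring
  have hmono := setIntegral_mono_on
    ((integrableOn_tdens hμ hσ).const_mul (-(Real.exp 1)⁻¹))
    (integrableOn_ratio_tdens hμ hσ) measurableSet_Ioi hpt
  calc -(Real.exp 1)⁻¹ = ∫ t in Ioi (0:ℝ), -(Real.exp 1)⁻¹ * tdens μ σ t := by
        rw [integral_const_mul _ _, integral_tdens_eq_one hμ hσ, mul_one]
    _ ≤ _ := hmono

lemma log_sub_ratio_integral_le :
    (∫ t in Ioi (0:ℝ), Real.log t * tdens μ σ t)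
      - (∫ t in Ioi (0:ℝ), t / (1 + t) * Real.log t * tdens μ σ t) ≤ (Real.exp 1)⁻¹ := by
  have he : (0:ℝ) < (Real.exp 1)⁻¹ := inv_pos.mpr (Real.exp_pos 1)
  rw [← integral_sub (integrableOn_log_tdens hμ hσ) (integrableOn_ratio_tdens hμ hσ)]
  have hcongr : ∀ t ∈ Ioi (0:ℝ),
      Real.log t * tdens μ σ t - t / (1 + t) * Real.log t * tdens μ σ t
        = Real.log t / (1 + t) * tdens μ σ t := by
    intro t ht
    have ht0 : (0:ℝ) < t := ht
    have h1t : (1:ℝ) + t ≠ 0 := by positivity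
    field_simp
    ring
  rw [setIntegral_congr_fun measurableSet_Ioi hcongr]
  have hpt : ∀ t ∈ Ioi (0:ℝ),
      Real.log t / (1 + t) * tdens μ σ t ≤ (Real.exp 1)⁻¹ * tdens μ σ t := by
    intro t ht
    have ht0 : (0:ℝ) < t := ht
    have h1t : (0:ℝ) < 1 + t := by linarith
    have htd : 0 ≤ tdens μ σ t := tdens_nonneg hμ hσ ht0
    have hkey : Real.log t / (1 + t) ≤ (Real.exp 1)⁻¹ := by
      rw [div_le_iff₀ h1t]
      have := log_le_exp_inv_mul ht0
      nlinarith
    exact mul_le_mul_of_nonneg_right hkey htd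
  have hmono := setIntegral_mono_on (integrableOn_logratio_tdens hμ hσ)
    ((integrableOn_tdens hμ hσ).const_mul ((Real.exp 1)⁻¹)) measurableSet_Ioi hpt
  calc _ ≤ ∫ t in Ioi (0:ℝ), (Real.exp 1)⁻¹ * tdens μ σ t := hmono
    _ = (Real.exp 1)⁻¹ := by rw [integral_const_mul _ _, integral_tdens_eq_one hμ hσ, mul_one]

end bounds

end SigmaHatAux



namespace SigmaHatAux

variable {μ σ s : ℝ}

lemma measurable_weightedExpDensity : Measurable (weightedExpDensity μ σ s) := by
  unfold weightedExpDensity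
  exact ((((measurable_const.mul
      (measurable_const.add (measurable_id.pow_const (-s)))).mul
        (measurable_const.div measurable_id)).mul
          (measurable_id.pow_const (-(s * μ)))).mul
            (Real.measurable_exp.comp ((measurable_id.pow_const (-s)).const_mul (-(μ * σ)))))

lemma measurable_wdens :
    Measurable (fun x => if 0 < x then weightedExpDensity μ σ s x else 0) := by
  have : MeasurableSet {x : ℝ | 0 < x} := measurableSet_Ioi
  exact Measurable.ite this measurable_weightedExpDensity measurable_const

lemma wdens_nonneg (hμ : 0 < μ) (hσ : 0 < σ) (x : ℝ) :
    0 ≤ if 0 < x then weightedExpDensity μ σ s x else 0 := by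
  split_ifs with hx
  · have hC := Cpos hμ hσ
    have h1 : (0:ℝ) < x ^ (-s) := rpow_pos_of_pos hx _
    have h2 : (0:ℝ) < x ^ (-(s * μ)) := rpow_pos_of_pos hx _
    have h3 : (0:ℝ) ≤ |s| / x := div_nonneg (abs_nonneg s) hx.le
    have h4 := (Real.exp_pos (-(μ * σ) * x ^ (-s))).le
    unfold weightedExpDensity
    positivity
  · exact le_refl 0

lemma density_transfer {x : ℝ} (hx : 0 < x) :
    weightedExpDensity μ σ s x = |(-s)| * x ^ (-s - 1) * tdens μ σ (x ^ (-s)) := by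
  have ht0 : (0:ℝ) < x ^ (-s) := rpow_pos_of_pos hx _
  have h1 : x ^ (-(s * μ)) = (x ^ (-s)) ^ μ := by
    rw [show -(s * μ) = (-s) * μ by ring, Real.rpow_mul hx.le]
  have h3 : (x ^ (-s)) ^ μ = (x ^ (-s)) ^ (μ - 1) * x ^ (-s) := by
    have := Real.rpow_add_one ht0.ne' (μ - 1)
    rwa [sub_add_cancel] at this
  have h2 : x ^ (-s - 1) = x ^ (-s) * x⁻¹ := by
    rw [show -s - 1 = -s + (-1) by ring, Real.rpow_add hx, Real.rpow_neg_one]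
  have h5 : Real.exp (-(μ * σ) * x ^ (-s)) = Real.exp (-(μ * σ * x ^ (-s))) := by
    congr 1
    ring
  unfold weightedExpDensity tdens
  rw [h1, h3, h2, h5, abs_neg]
  field_simp

end SigmaHatAux

namespace SigmaHatAux

variable {μ σ s : ℝ}

lemma transfer (hμ : 0 < μ) (hσ : 0 < σ) (hs : s ≠ 0)
    {f G : ℝ → ℝ} (hfmeas : Measurable f)
    (hfG : ∀ x : ℝ, 0 < x → f x = G (x ^ (-s)))
    (hint : IntegrableOn (fun t => G t * tdens μ σ t) (Ioi 0)) :
    Integrable f (weightedExpMeasure μ σ s) ∧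
      ∫ x, f x ∂(weightedExpMeasure μ σ s) = ∫ t in Ioi (0:ℝ), G t * tdens μ σ t := by
  set w : ℝ → ℝ := fun x => if 0 < x then weightedExpDensity μ σ s x else 0 with hw
  have hns : (-s) ≠ 0 := neg_ne_zero.mpr hs
  -- pointwise identity on Ioi 0
  have hpt : ∀ x ∈ Ioi (0:ℝ), f x * w x
      = (|(-s)| * x ^ (-s - 1)) • ((fun t => G t * tdens μ σ t) (x ^ (-s))) := by
    intro x hx
    have hx0 : (0:ℝ) < x := hx
    rw [hw]
    simp only [if_pos hx0, smul_eq_mul]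
    rw [hfG x hx0, density_transfer hx0]
    ring
  -- integrability of the x-side integrand on Ioi 0
  have hIoi : IntegrableOn (fun x => f x * w x) (Ioi 0) := by
    have h := (integrableOn_Ioi_comp_rpow_iff (fun t => G t * tdens μ σ t) hns).mpr hint
    exact h.congr_fun (fun x hx => (hpt x hx).symm) measurableSet_Ioi
  -- extend to all of ℝ by vanishing off Ioi 0
  have hzero : ∀ x : ℝ, x ∉ Ioi (0:ℝ) → f x * w x = 0 := by
    intro x hx
    rw [hw]
    simp only [mem_Ioi] at hx
    simp [if_neg hx]
  have hindic : (fun x => f x * w x) = Set.indicator (Ioi (0:ℝ)) (fun x => f x * w x) := by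
    funext x
    rw [Set.indicator_apply]
    split_ifs with h
    · rfl
    · exact hzero x h
  have hfull : Integrable (fun x => f x * w x) volume := by
    rw [hindic]
    exact (integrable_indicator_iff measurableSet_Ioi).2 hIoi
  constructor
  · rw [weightedExpMeasure]
    rw [integrable_withDensity_iff (measurable_wdens.ennreal_ofReal)
      (ae_of_all _ fun x => ENNReal.ofReal_lt_top)]
    have heq : (fun x => f x * (ENNReal.ofReal (w x)).toReal) = fun x => f x * w x := by
      funext x
      rw [ENNReal.toReal_ofReal (wdens_nonneg hμ hσ x)]
    rw [heq]
    exact hfull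
  · rw [weightedExpMeasure]
    have hwd : (fun x => ENNReal.ofReal (w x))
        = fun x => ((Real.toNNReal (w x) : NNReal) : ENNReal) := rfl
    rw [hwd, integral_withDensity_eq_integral_smul (measurable_wdens.real_toNNReal) f]
    have heq2 : (fun x => Real.toNNReal (w x) • f x) = fun x => f x * w x := by
      funext x
      rw [NNReal.smul_def, smul_eq_mul, Real.coe_toNNReal _ (wdens_nonneg hμ hσ x)]
      ring
    rw [heq2, hindic, integral_indicator measurableSet_Ioi,
      ← integral_comp_rpow_Ioi (fun t => G t * tdens μ σ t) hns]
    exact setIntegral_congr_fun measurableSet_Ioi hpt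

end SigmaHatAux

namespace SigmaHatAux

open ProbabilityTheory

lemma slln {Ω : Type*} [MeasurableSpace Ω] (P : Measure Ω) [IsProbabilityMeasure P]
    {μ σ s : ℝ} (Y : ℕ → Ω → ℝ) (hmeas : ∀ i, Measurable (Y i))
    (hindep : ProbabilityTheory.iIndepFun Y P)
    (hdist : ∀ i, Measure.map (Y i) P = weightedExpMeasure μ σ s)
    (g : ℝ → ℝ) (hg : Measurable g) (hint : Integrable g (weightedExpMeasure μ σ s)) :
    ∀ᵐ ω ∂P, Tendsto (fun n => (∑ i ∈ Finset.range n, g (Y i ω)) / n) atTop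
      (nhds (∫ x, g x ∂(weightedExpMeasure μ σ s))) := by
  set X : ℕ → Ω → ℝ := fun i ω => g (Y i ω) with hX
  have hident : ∀ i, ProbabilityTheory.IdentDistrib (X i) (X 0) P P := by
    intro i
    have hY : ProbabilityTheory.IdentDistrib (Y i) (Y 0) P P :=
      ⟨(hmeas i).aemeasurable, (hmeas 0).aemeasurable, by rw [hdist i, hdist 0]⟩
    exact hY.comp hg
  have hindep' : Pairwise (Function.onFun (ProbabilityTheory.IndepFun · · P) X) := by
    intro i j hij
    exact (hindep.indepFun hij).comp hg hg
  have hint0 : Integrable (X 0) P := by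
    have := (integrable_map_measure hg.aestronglyMeasurable
      (hmeas 0).aemeasurable).mp (by rw [hdist 0]; exact hint)
    exact this
  have hmean : ∫ ω, X 0 ω ∂P = ∫ x, g x ∂(weightedExpMeasure μ σ s) := by
    rw [← hdist 0, integral_map (hmeas 0).aemeasurable hg.aestronglyMeasurable]
  have := ProbabilityTheory.strong_law_ae_real X hint0 hindep' hident
  rw [hmean] at this
  exact this

/-- Deterministic convergence of the estimator formula. -/
lemma estimator_limit {z cc a b σ : ℝ} (hz : 0 < z) (hcc : 0 < cc) (hza : 0 < z - a)
    (hσ : 0 < σ) (hquad : z * cc * σ ^ 2 - (z * (1 - cc) + b) * σ - (z - a) = 0)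
    {u v w4 w5 : ℕ → ℝ} (hu : Tendsto u atTop (nhds z)) (hv : Tendsto v atTop (nhds cc))
    (h4 : Tendsto w4 atTop (nhds a)) (h5 : Tendsto w5 atTop (nhds b)) :
    Tendsto (fun n => (u n * (1 - v n) + w5 n +
        Real.sqrt ((u n * (1 - v n) + w5 n) ^ 2 + 4 * u n * v n * (u n - w4 n))) /
      (2 * u n * v n)) atTop (nhds σ) := by
  set B : ℝ := z * (1 - cc) + b with hB
  have hkey : (2 * z * cc * σ - B) * σ = z * cc * σ ^ 2 + (z - a) := by
    linear_combination hquad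
  have hposmul : 0 < (2 * z * cc * σ - B) * σ := by
    rw [hkey]; nlinarith [mul_pos hz hcc, sq_nonneg σ]
  have hsign : 0 ≤ 2 * z * cc * σ - B := by
    rcases mul_pos_iff.mp hposmul with ⟨h1, _⟩ | ⟨_, h2⟩
    · exact h1.le
    · linarith
  have hD : B ^ 2 + 4 * z * cc * (z - a) = (2 * z * cc * σ - B) ^ 2 := by
    linear_combination (-4 * z * cc) * hquad
  have hnum : Tendsto (fun n => u n * (1 - v n) + w5 n +
      Real.sqrt ((u n * (1 - v n) + w5 n) ^ 2 + 4 * u n * v n * (u n - w4 n))) atTop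
      (nhds (B + Real.sqrt (B ^ 2 + 4 * z * cc * (z - a)))) := by
    have hBd : Tendsto (fun n => u n * (1 - v n) + w5 n) atTop (nhds B) :=
      (hu.mul (tendsto_const_nhds.sub hv)).add h5
    have hin : Tendsto (fun n => (u n * (1 - v n) + w5 n) ^ 2 + 4 * u n * v n * (u n - w4 n))
        atTop (nhds (B ^ 2 + 4 * z * cc * (z - a))) := by
      exact (hBd.pow 2).add ((((hu.const_mul 4).mul hv)).mul (hu.sub h4))
    exact hBd.add (hin.sqrt)
  have hden : Tendsto (fun n => 2 * u n * v n) atTop (nhds (2 * z * cc)) :=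
    (hu.const_mul 2).mul hv
  have hden_ne : (2 : ℝ) * z * cc ≠ 0 := by positivity
  have := hnum.div hden hden_ne
  have hval : (B + Real.sqrt (B ^ 2 + 4 * z * cc * (z - a))) / (2 * z * cc) = σ := by
    rw [hD, Real.sqrt_sq hsign, add_sub_cancel]
    field_simp
  rwa [hval] at this

end SigmaHatAux


end SigmaHatAuxSection

/-- Strong consistency of the closed-form estimator `σ̂` for the weighted exponential family
with generator `T(x) = x^(−s)`: if `(Yᵢ)` is i.i.d. with density `f_{μ,σ,s}`, then the
estimator `σ̂ₙ` built from the sample statistics `Z̄, Ȳ₄, Ȳ₅, Ȳ₆` converges to `σ`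
almost surely. -/
theorem sigmaHat_strongly_consistent
    {Ω : Type*} [MeasurableSpace Ω] (P : Measure Ω) [IsProbabilityMeasure P]
    (μ σ s : ℝ) (hμ : 0 < μ) (hσ : 0 < σ) (hs : s ≠ 0)
    (Y : ℕ → Ω → ℝ) (hmeas : ∀ i, Measurable (Y i))
    (hindep : ProbabilityTheory.iIndepFun Y P)
    (hdist : ∀ i, Measure.map (Y i) P = weightedExpMeasure μ σ s)
    (Y1 Y3 Y4 Y5 Y6 Z sigmaHat : ℕ → Ω → ℝ)
    (hY1 : ∀ n ω, Y1 n ω = (∑ i ∈ Finset.range n, Real.log (Y i ω)) / n)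
    (hY3 : ∀ n ω, Y3 n ω =
      (∑ i ∈ Finset.range n,
        (-s * (Y i ω) ^ (-s) / (1 + (Y i ω) ^ (-s))) * Real.log (Y i ω)) / n)
    (hY4 : ∀ n ω, Y4 n ω = -s * Y1 n ω)
    (hY5 : ∀ n ω, Y5 n ω = (∑ i ∈ Finset.range n, (-s * (Y i ω) ^ (-s)) * Real.log (Y i ω)) / n)
    (hY6 : ∀ n ω, Y6 n ω = (∑ i ∈ Finset.range n, (Y i ω) ^ (-s)) / n)
    (hZ : ∀ n ω, Z n ω = 1 + Y3 n ω)
    (hsigmaHat : ∀ n ω, sigmaHat n ω =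
      (Z n ω * (1 - Y6 n ω) + Y5 n ω +
        Real.sqrt ((Z n ω * (1 - Y6 n ω) + Y5 n ω) ^ 2 +
          4 * Z n ω * Y6 n ω * (Z n ω - Y4 n ω))) / (2 * Z n ω * Y6 n ω)) :
    ∀ᵐ ω ∂P, Tendsto (fun n => sigmaHat n ω) atTop (nhds σ) := by
  classical
  have hρ : (0:ℝ) < μ * σ := mul_pos hμ hσ
  -- the four strong laws
  -- g4 : x ↦ -s * log x,   limit a = ∫ log t * tdens
  have hfG4 : ∀ x : ℝ, 0 < x → -s * Real.log x = Real.log (x ^ (-s)) := by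
    intro x hx
    rw [Real.log_rpow hx]
  have ht4 := SigmaHatAux.transfer hμ hσ hs (Real.measurable_log.const_mul (-s)) hfG4
    (SigmaHatAux.integrableOn_log_tdens hμ hσ)
  have s4 := SigmaHatAux.slln P Y hmeas hindep hdist _
    (Real.measurable_log.const_mul (-s)) ht4.1
  rw [ht4.2] at s4
  -- g3 : x ↦ (-s x^{-s}/(1+x^{-s})) log x,  limit d
  have hfG3 : ∀ x : ℝ, 0 < x →
      (-s * x ^ (-s) / (1 + x ^ (-s))) * Real.log x
        = x ^ (-s) / (1 + x ^ (-s)) * Real.log (x ^ (-s)) := by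
    intro x hx
    rw [Real.log_rpow hx]
    ring
  have hmeas3 : Measurable (fun x : ℝ => (-s * x ^ (-s) / (1 + x ^ (-s))) * Real.log x) :=
    (((measurable_id.pow_const (-s)).const_mul (-s)).div
      (measurable_const.add (measurable_id.pow_const (-s)))).mul Real.measurable_log
  have ht3 := SigmaHatAux.transfer hμ hσ hs hmeas3 hfG3
    (SigmaHatAux.integrableOn_ratio_tdens hμ hσ)
  have s3 := SigmaHatAux.slln P Y hmeas hindep hdist _ hmeas3 ht3.1
  rw [ht3.2] at s3
  -- g5 : x ↦ -s x^{-s} log x, limit b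
  have hfG5 : ∀ x : ℝ, 0 < x →
      (-s * x ^ (-s)) * Real.log x = x ^ (-s) * Real.log (x ^ (-s)) := by
    intro x hx
    rw [Real.log_rpow hx]
    ring
  have hmeas5 : Measurable (fun x : ℝ => (-s * x ^ (-s)) * Real.log x) :=
    ((measurable_id.pow_const (-s)).const_mul (-s)).mul Real.measurable_log
  have ht5 := SigmaHatAux.transfer hμ hσ hs hmeas5 hfG5
    (SigmaHatAux.integrableOn_mul_log_tdens hμ hσ)
  have s5 := SigmaHatAux.slln P Y hmeas hindep hdist _ hmeas5 ht5.1
  rw [ht5.2] at s5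
  -- g6 : x ↦ x^{-s}, limit cc
  have hfG6 : ∀ x : ℝ, 0 < x → x ^ (-s) = x ^ (-s) := fun x _ => rfl
  have hmeas6 : Measurable (fun x : ℝ => x ^ (-s)) := measurable_id.pow_const (-s)
  have ht6 := SigmaHatAux.transfer hμ hσ hs hmeas6 hfG6
    (SigmaHatAux.integrableOn_mul_tdens hμ hσ)
  have s6 := SigmaHatAux.slln P Y hmeas hindep hdist _ hmeas6 ht6.1
  rw [ht6.2] at s6
  beta_reduce at s3 s4 s5 s6
  -- the limit constants
  set a : ℝ := ∫ t in Set.Ioi (0:ℝ), Real.log t * SigmaHatAux.tdens μ σ t with ha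
  set d : ℝ := ∫ t in Set.Ioi (0:ℝ),
    t / (1 + t) * Real.log t * SigmaHatAux.tdens μ σ t with hd
  set b : ℝ := ∫ t in Set.Ioi (0:ℝ), t * Real.log t * SigmaHatAux.tdens μ σ t with hb
  set cc : ℝ := ∫ t in Set.Ioi (0:ℝ), t * SigmaHatAux.tdens μ σ t with hcc
  -- deterministic facts about the constants
  have hE : (Real.exp 1)⁻¹ < 1 := by
    have h1 : (1:ℝ) < Real.exp 1 := by
      have := Real.exp_one_gt_d9; linarith
    have h2 : (0:ℝ) < Real.exp 1 := Real.exp_pos 1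
    have := mul_inv_cancel₀ h2.ne'
    nlinarith [inv_pos.mpr h2]
  have hdge : -(Real.exp 1)⁻¹ ≤ d := SigmaHatAux.ratio_integral_ge hμ hσ
  have hadle : a - d ≤ (Real.exp 1)⁻¹ := SigmaHatAux.log_sub_ratio_integral_le hμ hσ
  have hzpos : (0:ℝ) < 1 + d := by linarith
  have hzapos : (0:ℝ) < (1 + d) - a := by linarith
  have hceq : μ * σ * (σ + 1) * cc = μ * σ + μ + 1 := SigmaHatAux.integral_mul_tdens hμ hσ
  have hco : (0:ℝ) < μ * σ * (σ + 1) := by positivity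
  have hccpos : (0:ℝ) < cc := by nlinarith [hco]
  have hstein := SigmaHatAux.stein_identity hμ hσ
  rw [← ha, ← hd, ← hb] at hstein
  have hzeq : 1 + d = μ * σ * b - μ * a := by linarith
  have hquad : (1 + d) * cc * σ ^ 2 - ((1 + d) * (1 - cc) + b) * σ - ((1 + d) - a) = 0 := by
    linear_combination (cc * σ ^ 2 - (1 - cc) * σ - 1) * hzeq + (σ * b - a) * hceq
  -- combine
  filter_upwards [s3, s4, s5, s6] with ω hω3 hω4 hω5 hω6
  have hT3 : Tendsto (fun n => Y3 n ω) atTop (nhds d) := by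
    refine hω3.congr fun n => ?_
    rw [hY3 n ω]
  have hTZ : Tendsto (fun n => Z n ω) atTop (nhds (1 + d)) := by
    have h := hT3.const_add (1:ℝ)
    exact h.congr fun n => (hZ n ω).symm
  have hT4 : Tendsto (fun n => Y4 n ω) atTop (nhds a) := by
    refine hω4.congr fun n => ?_
    rw [hY4 n ω, hY1 n ω, ← mul_div_assoc, ← Finset.mul_sum]
  have hT5 : Tendsto (fun n => Y5 n ω) atTop (nhds b) := by
    refine hω5.congr fun n => ?_
    rw [hY5 n ω]
  have hT6 : Tendsto (fun n => Y6 n ω) atTop (nhds cc) := by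
    refine hω6.congr fun n => ?_
    rw [hY6 n ω]
  have := SigmaHatAux.estimator_limit hzpos hccpos hzapos hσ hquad hTZ hT6 hT4 hT5
  exact this.congr fun n => (hsigmaHat n ω).symm
end
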